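/- arXiv:2507.18251 — 8 statements merged into one kernel-verified Lean document; each statement's English description precedes it below -/
import Mathlib

section
/- Let X be an allocation of a personalized bi-valued instance and let X' be a minimal Pareto-improvement of X. Then for every agent i, there exists a good in X_i \ X'_i if and only if there exists a good in X'_i \ X_i; that is, every agent who gives away some good also receives some good, and every agent who receives some good also gives away some good (the minimum Pareto-improvement graph contains no source and no sink node). -/
open Finset

/-- Additive utility of a bundle: the sum of the values of the single goods in it. -/
def util {n : ℕ} {M : Type*} [DecidableEq M] (u : Fin n → M → ℝ) (i : Fin n)
    (S : Finset M) : ℝ :=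
  ∑ g ∈ S, u i g

/-- `X` is an allocation: a partition of the set `M` of goods into `n` (possibly empty) bundles. -/
def IsAllocation {n : ℕ} {M : Type*} [DecidableEq M] (X : Fin n → Finset M) : Prop :=
  (∀ g : M, ∃ i, g ∈ X i) ∧ ∀ i j : Fin n, i ≠ j → Disjoint (X i) (X j)

/-- `X` is EFX w.r.t. utilities `u`. -/
def IsEFX {n : ℕ} {M : Type*} [DecidableEq M] (u : Fin n → M → ℝ)
    (X : Fin n → Finset M) : Prop :=
  ∀ i j : Fin n, ∀ g ∈ X j, util u i ((X j).erase g) ≤ util u i (X i)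

/-- `X'` Pareto-dominates `X` w.r.t. utilities `u`. -/
def ParetoDominates {n : ℕ} {M : Type*} [DecidableEq M] (u : Fin n → M → ℝ)
    (X' X : Fin n → Finset M) : Prop :=
  (∀ i, util u i (X i) ≤ util u i (X' i)) ∧ ∃ j, util u j (X j) < util u j (X' j)

/-- `X` is Pareto-optimal: no allocation Pareto-dominates it. -/
def IsParetoOptimal {n : ℕ} {M : Type*} [DecidableEq M] (u : Fin n → M → ℝ)
    (X : Fin n → Finset M) : Prop :=
  ¬ ∃ X' : Fin n → Finset M, IsAllocation X' ∧ ParetoDominates u X' X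

/-- The number of goods transferred (i.e. whose owner changes) when moving from
allocation `X` to allocation `X'`. -/
noncomputable def transferCount {n : ℕ} {M : Type*} [DecidableEq M]
    (X X' : Fin n → Finset M) : ℕ :=
  Set.ncard {g : M | ∃ i, g ∈ X i ∧ g ∉ X' i}

/-- `X'` is a minimal Pareto-improvement of `X`: it is an allocation Pareto-dominating `X`
that minimizes the number of transferred goods among all such allocations. -/
def IsMinimalParetoImprovement {n : ℕ} {M : Type*} [DecidableEq M] (u : Fin n → M → ℝ)
    (X X' : Fin n → Finset M) : Prop :=
  IsAllocation X' ∧ ParetoDominates u X' X ∧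
    ∀ X'' : Fin n → Finset M, IsAllocation X'' → ParetoDominates u X'' X →
      transferCount X X' ≤ transferCount X X''

/-- In a minimal Pareto-improvement of an allocation of a personalized
bi-valued instance, an agent gives away some good iff she receives some good
(the minimum Pareto-improvement graph has no source and no sink node). -/
theorem min_pareto_improvement_no_source_no_sink
    (n : ℕ) (M : Type*) [Fintype M] [DecidableEq M]
    (u : Fin n → M → ℝ) (a b : Fin n → ℝ)
    (hab : ∀ i, b i < a i) (hb : ∀ i, 0 < b i)
    (hbi : ∀ i g, u i g = a i ∨ u i g = b i)
    (X X' : Fin n → Finset M) (hX : IsAllocation X)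
    (hmin : IsMinimalParetoImprovement u X X') :
    ∀ i : Fin n, (∃ g, g ∈ X i ∧ g ∉ X' i) ↔ (∃ g, g ∈ X' i ∧ g ∉ X i) := by
  intro i
  have hpos : ∀ (k : Fin n) (g : M), 0 < u k g := fun k g => by
    rcases hbi k g with h | h <;> rw [h]
    exacts [(hb k).trans (hab k), hb k]
  obtain ⟨⟨hcov', hdisj'⟩, ⟨hge, _⟩, hminT⟩ := hmin
  constructor
  · rintro ⟨g, hgX, hgX'⟩
    by_contra hno
    push_neg at hno
    have hlt : util u i (X' i) < util u i (X i) :=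
      Finset.sum_lt_sum_of_subset hno hgX hgX' (hpos i g) fun j _ _ => (hpos i j).le
    linarith [hge i]
  · rintro ⟨g, hgX', hgXi⟩
    by_contra hno
    push_neg at hno
    obtain ⟨j, hgXj⟩ := hX.1 g
    have hji : j ≠ i := fun h => hgXi (h ▸ hgXj)
    have hgX'k : ∀ k, k ≠ i → g ∉ X' k := fun k hk hgk =>
      Finset.disjoint_left.mp (hdisj' k i hk) hgk hgX'
    have hgXk : ∀ k, k ≠ j → g ∉ X k := fun k hk hgk =>
      Finset.disjoint_left.mp (hX.2 k j hk) hgk hgXj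
    have hgX'j : g ∉ X' j := hgX'k j hji
    set X'' : Fin n → Finset M :=
      fun k => if k = i then (X' i).erase g else if k = j then insert g (X' j) else X' k
      with hX''def
    have hmem : ∀ (h : M) (k : Fin n), h ≠ g → (h ∈ X'' k ↔ h ∈ X' k) := by
      intro h k hne
      simp only [X'']
      split_ifs with h1 h2
      · subst h1; simp [Finset.mem_erase, hne]
      · subst h2; simp [hne]
      · rfl
    have hgmem : ∀ k : Fin n, g ∈ X'' k ↔ k = j := by
      intro k
      constructor
      · intro hk
        by_contra hkj
        simp only [X''] at hk
        by_cases h1 : k = i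
        · rw [if_pos h1] at hk
          exact (Finset.notMem_erase g _) hk
        · rw [if_neg h1, if_neg hkj] at hk
          exact hgX'k k h1 hk
      · rintro rfl
        simp [X'', hji]
    have hAll : IsAllocation X'' := by
      constructor
      · intro h
        by_cases hhg : h = g
        · exact ⟨j, by rw [hhg]; exact (hgmem j).mpr rfl⟩
        · obtain ⟨k, hk⟩ := hcov' h
          exact ⟨k, (hmem h k hhg).mpr hk⟩
      · intro k l hkl
        rw [Finset.disjoint_left]
        intro h hk hl
        by_cases hhg : h = g
        · subst hhg
          exact hkl (((hgmem k).mp hk).trans ((hgmem l).mp hl).symm)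
        · exact Finset.disjoint_left.mp (hdisj' k l hkl) ((hmem h k hhg).mp hk)
            ((hmem h l hhg).mp hl)
    have hutilj : util u j (X'' j) = u j g + util u j (X' j) := by
      simp [util, X'', hji, Finset.sum_insert hgX'j]
    have hPD : ParetoDominates u X'' X := by
      constructor
      · intro k
        by_cases hki : k = i
        · subst hki
          have hsub : X k ⊆ (X' k).erase g := fun h hh =>
            Finset.mem_erase.mpr ⟨fun he => hgXi (he ▸ hh), hno h hh⟩
          have h2 := Finset.sum_le_sum_of_subset_of_nonneg hsub
            (fun x _ _ => (hpos k x).le)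
          simpa [util, X''] using h2
        · by_cases hkj : k = j
          · subst hkj
            rw [hutilj]
            linarith [hge k, hpos k g]
          · have hkk : X'' k = X' k := by simp [X'', hki, hkj]
            rw [hkk]; exact hge k
      · exact ⟨j, by rw [hutilj]; linarith [hge j, hpos j g]⟩
    have hlt : transferCount X X'' < transferCount X X' := by
      unfold transferCount
      apply Set.ncard_lt_ncard _ (Set.toFinite _)
      rw [Set.ssubset_def]
      constructor
      · rintro h ⟨k, hk, hk''⟩
        refine ⟨k, hk, ?_⟩
        by_cases hhg : h = g
        · subst hhg
          by_cases hkj : k = j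
          · exact absurd ((hgmem k).mpr hkj) hk''
          · exact absurd hk (hgXk k hkj)
        · intro hk'
          exact hk'' ((hmem h k hhg).mpr hk')
      · intro hS
        obtain ⟨k, hk, hk''⟩ := hS ⟨j, hgXj, hgX'j⟩
        by_cases hkj : k = j
        · exact absurd ((hgmem k).mpr hkj) hk''
        · exact absurd hk (hgXk k hkj)
    exact absurd (hminT X'' hAll hPD) (not_le.mpr hlt)
end

section
/- Let X be an allocation of a personalized bi-valued instance and let X' be a minimal Pareto-improvement of X. Then no good is transferred from an agent i to an agent j such that the good is large for i and small for j (the minimum Pareto-improvement graph contains no Large-to-Small edge). -/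
open Finset

/-- In a minimal Pareto-improvement of an allocation of a personalized
bi-valued instance, no good is transferred from an agent who values it as large to an
agent who values it as small (no Large-to-Small edge). -/
theorem min_pareto_improvement_no_LS_edge
    (n : ℕ) (M : Type*) [Fintype M] [DecidableEq M]
    (u : Fin n → M → ℝ) (a b : Fin n → ℝ)
    (hab : ∀ i, b i < a i) (hb : ∀ i, 0 < b i)
    (hbi : ∀ i g, u i g = a i ∨ u i g = b i)
    (X X' : Fin n → Finset M) (hX : IsAllocation X)
    (hmin : IsMinimalParetoImprovement u X X') :
    ¬ ∃ (i j : Fin n) (g : M), i ≠ j ∧ g ∈ X i ∧ g ∈ X' j ∧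
      u i g = a i ∧ u j g = b j := by
  rintro ⟨i, j, g, hij, hgXi, hgX'j, hla, hsm⟩
  obtain ⟨hX'alloc, hPD, hminimal⟩ := hmin
  have hupos : ∀ k g', 0 < u k g' := by
    intro k g'
    rcases hbi k g' with h | h <;> rw [h]
    · exact (hb k).trans (hab k)
    · exact hb k
  have huniq' : ∀ (y : M) (k l : Fin n), y ∈ X' k → y ∈ X' l → k = l := by
    intro y k l hk hl
    by_contra hkl
    exact Finset.disjoint_left.mp (hX'alloc.2 k l hkl) hk hl
  have hXuniq : ∀ (y : M) (k l : Fin n), y ∈ X k → y ∈ X l → k = l := by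
    intro y k l hk hl
    by_contra hkl
    exact Finset.disjoint_left.mp (hX.2 k l hkl) hk hl
  have hgnotX'i : g ∉ X' i := Finset.disjoint_right.mp (hX'alloc.2 i j hij) hgX'j
  -- find a good x gained by i
  have hAle : util u i (X i) ≤ util u i (X' i) := hPD.1 i
  have hsplit1 : util u i (X i ∩ X' i) + util u i (X i \ X' i) = util u i (X i) :=
    Finset.sum_inter_add_sum_sdiff _ _ _
  have hsplit2 : util u i (X' i ∩ X i) + util u i (X' i \ X i) = util u i (X' i) :=
    Finset.sum_inter_add_sum_sdiff _ _ _
  have hic : util u i (X i ∩ X' i) = util u i (X' i ∩ X i) := by rw [Finset.inter_comm]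
  have hg_diff : g ∈ X i \ X' i := Finset.mem_sdiff.mpr ⟨hgXi, hgnotX'i⟩
  have h1 : a i ≤ util u i (X i \ X' i) := by
    rw [← hla]
    exact Finset.single_le_sum (fun y _ => (hupos i y).le) hg_diff
  have h2 : 0 < util u i (X' i \ X i) := by
    have := (hb i).trans (hab i)
    linarith
  have hne : (X' i \ X i).Nonempty := by
    rcases Finset.eq_empty_or_nonempty (X' i \ X i) with he | hne
    · rw [he] at h2; simp [util] at h2
    · exact hne
  obtain ⟨x, hx⟩ := hne
  have hxX'i : x ∈ X' i := (Finset.mem_sdiff.mp hx).1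
  have hxnXi : x ∉ X i := (Finset.mem_sdiff.mp hx).2
  have hxg : x ≠ g := fun e => hgnotX'i (e ▸ hxX'i)
  have hxnX'j : x ∉ X' j := Finset.disjoint_left.mp (hX'alloc.2 i j hij) hxX'i
  -- the swapped allocation
  set X'' : Fin n → Finset M := fun k =>
    if k = i then insert g ((X' i).erase x)
    else if k = j then insert x ((X' j).erase g) else X' k with hX''def
  have hXi'' : X'' i = insert g ((X' i).erase x) := by simp [hX''def]
  have hXj'' : X'' j = insert x ((X' j).erase g) := by simp [hX''def, Ne.symm hij]
  have hXk'' : ∀ k, k ≠ i → k ≠ j → X'' k = X' k := by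
    intro k h1 h2; simp [hX''def, h1, h2]
  have hfwd : ∀ (y : M) (k : Fin n), y ∈ X'' k →
      (y = g ∧ k = i) ∨ (y = x ∧ k = j) ∨ (y ∈ X' k ∧ y ≠ g ∧ y ≠ x) := by
    intro y k hy
    by_cases hk1 : k = i
    · subst hk1
      rw [hXi''] at hy
      rcases Finset.mem_insert.mp hy with rfl | hy'
      · exact Or.inl ⟨rfl, rfl⟩
      · obtain ⟨hyx, hyX⟩ := Finset.mem_erase.mp hy'
        exact Or.inr (Or.inr ⟨hyX, fun e => hgnotX'i (e ▸ hyX), hyx⟩)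
    · by_cases hk2 : k = j
      · subst hk2
        rw [hXj''] at hy
        rcases Finset.mem_insert.mp hy with rfl | hy'
        · exact Or.inr (Or.inl ⟨rfl, rfl⟩)
        · obtain ⟨hyg, hyX⟩ := Finset.mem_erase.mp hy'
          exact Or.inr (Or.inr ⟨hyX, hyg, fun e => hxnX'j (e ▸ hyX)⟩)
      · rw [hXk'' k hk1 hk2] at hy
        refine Or.inr (Or.inr ⟨hy, ?_, ?_⟩)
        · intro e; exact hk2 (huniq' y k j (e ▸ hy) (e ▸ hgX'j))
        · intro e; exact hk1 (huniq' y k i (e ▸ hy) (e ▸ hxX'i))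
  have hX''alloc : IsAllocation X'' := by
    constructor
    · intro y
      by_cases hyg : y = g
      · exact ⟨i, by rw [hXi'', hyg]; exact Finset.mem_insert_self _ _⟩
      · by_cases hyx : y = x
        · exact ⟨j, by rw [hXj'', hyx]; exact Finset.mem_insert_self _ _⟩
        · obtain ⟨k, hk⟩ := hX'alloc.1 y
          refine ⟨k, ?_⟩
          by_cases hk1 : k = i
          · subst hk1
            rw [hXi'']
            exact Finset.mem_insert_of_mem (Finset.mem_erase.mpr ⟨hyx, hk⟩)
          · by_cases hk2 : k = j
            · subst hk2
              rw [hXj'']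
              exact Finset.mem_insert_of_mem (Finset.mem_erase.mpr ⟨hyg, hk⟩)
            · rw [hXk'' k hk1 hk2]; exact hk
    · intro k l hkl
      rw [Finset.disjoint_left]
      intro y hyk hyl
      apply hkl
      rcases hfwd y k hyk with ⟨rfl, rfl⟩ | ⟨rfl, rfl⟩ | ⟨hyX, hyg, hyx⟩ <;>
        rcases hfwd y l hyl with ⟨e1, rfl⟩ | ⟨e1, rfl⟩ | ⟨hyX', hyg', hyx'⟩
      · rfl
      · exact absurd e1.symm hxg
      · exact absurd rfl hyg'
      · exact absurd e1 hxg
      · rfl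
      · exact absurd rfl hyx'
      · exact absurd e1 hyg
      · exact absurd e1 hyx
      · exact huniq' y k l hyX hyX'
  -- utility computations
  have hgne : g ∉ (X' i).erase x := fun hc => hgnotX'i (Finset.mem_erase.mp hc).2
  have hxne : x ∉ (X' j).erase g := fun hc => hxnX'j (Finset.mem_erase.mp hc).2
  have hui : util u i (X'' i) = util u i (X' i) + u i g - u i x := by
    rw [hXi'']
    unfold util
    rw [Finset.sum_insert hgne, ← Finset.sum_erase_add (X' i) _ hxX'i]
    ring
  have huj : util u j (X'' j) = util u j (X' j) + u j x - u j g := by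
    rw [hXj'']
    unfold util
    rw [Finset.sum_insert hxne, ← Finset.sum_erase_add (X' j) _ hgX'j]
    ring
  have hdom2 : ∀ k, util u k (X' k) ≤ util u k (X'' k) := by
    intro k
    by_cases hk1 : k = i
    · rw [hk1, hui, hla]
      rcases hbi i x with h | h <;> rw [h] <;> linarith [hab i]
    · by_cases hk2 : k = j
      · rw [hk2, huj, hsm]
        rcases hbi j x with h | h <;> rw [h] <;> linarith [hab j]
      · rw [hXk'' k hk1 hk2]
  have hPD2 : ParetoDominates u X'' X := by
    refine ⟨fun k => (hPD.1 k).trans (hdom2 k), ?_⟩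
    obtain ⟨k, hk⟩ := hPD.2
    exact ⟨k, hk.trans_le (hdom2 k)⟩
  -- fewer transfers
  have hsub : {y : M | ∃ k, y ∈ X k ∧ y ∉ X'' k} ⊆ {y : M | ∃ k, y ∈ X k ∧ y ∉ X' k} := by
    rintro y ⟨k, hyk, hyk''⟩
    refine ⟨k, hyk, fun hy' => hyk'' ?_⟩
    by_cases hyg : y = g
    · have hkj : k = j := huniq' y k j (hyg ▸ hy') (hyg ▸ hgX'j)
      have hki : k = i := hXuniq y k i hyk (hyg ▸ hgXi)
      exact absurd (hki.symm.trans hkj) hij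
    · by_cases hyx : y = x
      · have hki : k = i := huniq' y k i hy' (hyx ▸ hxX'i)
        exact absurd (hki ▸ hyx ▸ hyk) hxnXi
      · by_cases hk1 : k = i
        · subst hk1
          rw [hXi'']
          exact Finset.mem_insert_of_mem (Finset.mem_erase.mpr ⟨hyx, hy'⟩)
        · by_cases hk2 : k = j
          · subst hk2
            rw [hXj'']
            exact Finset.mem_insert_of_mem (Finset.mem_erase.mpr ⟨hyg, hy'⟩)
          · rw [hXk'' k hk1 hk2]; exact hy'
  have hgT : g ∈ {y : M | ∃ k, y ∈ X k ∧ y ∉ X' k} := ⟨i, hgXi, hgnotX'i⟩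
  have hgnT : g ∉ {y : M | ∃ k, y ∈ X k ∧ y ∉ X'' k} := by
    rintro ⟨k, hk1, hk2⟩
    have hki : k = i := hXuniq g k i hk1 hgXi
    subst hki
    apply hk2
    rw [hXi'']
    exact Finset.mem_insert_self _ _
  have hss : {y : M | ∃ k, y ∈ X k ∧ y ∉ X'' k} ⊂ {y : M | ∃ k, y ∈ X k ∧ y ∉ X' k} :=
    (Set.ssubset_iff_of_subset hsub).mpr ⟨g, hgT, hgnT⟩
  have hlt : transferCount X X'' < transferCount X X' :=
    Set.ncard_lt_ncard hss (Set.toFinite _)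
  have := hminimal X'' hX''alloc hPD2
  omega
end

section
/- Let X be an allocation of a personalized bi-valued instance and let X' be a minimal Pareto-improvement of X. Then there do not exist agents i, j, l with i ≠ j and j ≠ l and goods g ≠ h such that g is transferred from i to j with g small for both i and j, and h is transferred from j to l with h small for both j and l (the minimum Pareto-improvement graph contains no two consecutive Small-to-Small edges). -/
open Finset

/-- In a minimal Pareto-improvement of an allocation of a personalized
bi-valued instance, there are no two consecutive Small-to-Small transfers: no agents
`i ≠ j`, `j ≠ l` and goods `g ≠ h` such that `g` is transferred from `i` to `j` with `g`
small for both, and `h` is transferred from `j` to `l` with `h` small for both. -/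
theorem min_pareto_improvement_no_consecutive_SS_edges
    (n : ℕ) (M : Type*) [Fintype M] [DecidableEq M]
    (u : Fin n → M → ℝ) (a b : Fin n → ℝ)
    (hab : ∀ i, b i < a i) (hb : ∀ i, 0 < b i)
    (hbi : ∀ i g, u i g = a i ∨ u i g = b i)
    (X X' : Fin n → Finset M) (hX : IsAllocation X)
    (hmin : IsMinimalParetoImprovement u X X') :
    ¬ ∃ (i j l : Fin n) (g h : M), i ≠ j ∧ j ≠ l ∧ g ≠ h ∧
      g ∈ X i ∧ g ∈ X' j ∧ u i g = b i ∧ u j g = b j ∧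
      h ∈ X j ∧ h ∈ X' l ∧ u j h = b j ∧ u l h = b l := by
  classical
  rintro ⟨i, j, l, g, h, hij, hjl, hgh, hgXi, hgX'j, huig, hujg, hhXj, hhX'l, hujh, hulh⟩
  obtain ⟨hX'alloc, hX'dom, hminimal⟩ := hmin
  have uniq : ∀ {Y : Fin n → Finset M}, IsAllocation Y →
      ∀ {x : M} {k k' : Fin n}, x ∈ Y k → x ∈ Y k' → k = k' := by
    intro Y hY x k k' h1 h2
    by_contra hne
    exact absurd h2 (Finset.disjoint_left.mp (hY.2 k k' hne) h1)
  have hgX'i : g ∉ X' i := fun hh => hij (uniq hX'alloc hh hgX'j)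
  have hhX'j : h ∉ X' j := fun hh => hjl (uniq hX'alloc hh hhX'l)
  have hgX'l : g ∉ X' l := fun hh => hjl (uniq hX'alloc hgX'j hh)
  set X'' : Fin n → Finset M := fun k =>
    Finset.univ.filter (fun x => if x = g then k = l else if x = h then k = j else x ∈ X' k)
    with hX''def
  have mem_X'' : ∀ (k : Fin n) (x : M),
      x ∈ X'' k ↔ (if x = g then k = l else if x = h then k = j else x ∈ X' k) := by
    intro k x; simp [hX''def]
  have hX''j : X'' j = insert h ((X' j).erase g) := by
    ext x
    rw [mem_X'']
    by_cases hxg : x = g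
    · simp [hxg, hjl, hgh]
    · by_cases hxh : x = h
      · simp [hxh, Ne.symm hgh]
      · simp [hxg, hxh]
  have hX''l : X'' l = insert g ((X' l).erase h) := by
    ext x
    rw [mem_X'']
    by_cases hxg : x = g
    · simp [hxg]
    · by_cases hxh : x = h
      · simp [hxh, Ne.symm hgh, Ne.symm hjl, hhX'j]
      · simp [hxg, hxh]
  have hX''other : ∀ k, k ≠ j → k ≠ l → X'' k = X' k := by
    intro k hkj hkl
    ext x
    rw [mem_X'']
    by_cases hxg : x = g
    · simp only [hxg, if_pos rfl]
      constructor
      · intro hh; exact absurd hh hkl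
      · intro hh; exact absurd (uniq hX'alloc hh hgX'j) hkj
    · by_cases hxh : x = h
      · simp only [hxh, if_neg (Ne.symm hgh), if_pos rfl]
        constructor
        · intro hh; exact absurd hh hkj
        · intro hh; exact absurd (uniq hX'alloc hh hhX'l) hkl
      · simp [hxg, hxh]
  -- X'' is an allocation
  have hX''alloc : IsAllocation X'' := by
    constructor
    · intro x
      by_cases hxg : x = g
      · exact ⟨l, by rw [mem_X'']; simp [hxg]⟩
      · by_cases hxh : x = h
        · exact ⟨j, by rw [mem_X'']; simp [hxh, Ne.symm hgh]⟩
        · obtain ⟨k, hk⟩ := hX'alloc.1 x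
          exact ⟨k, by rw [mem_X'']; simp [hxg, hxh, hk]⟩
    · intro k k' hne
      rw [Finset.disjoint_left]
      intro x h1 h2
      rw [mem_X''] at h1 h2
      apply hne
      by_cases hxg : x = g
      · simp only [if_pos hxg] at h1 h2; rw [h1, h2]
      · by_cases hxh : x = h
        · simp only [if_neg hxg, if_pos hxh] at h1 h2; rw [h1, h2]
        · simp only [if_neg hxg, if_neg hxh] at h1 h2
          exact uniq hX'alloc h1 h2
  -- utilities
  have hutilj : util u j (X'' j) = util u j (X' j) := by
    rw [hX''j]
    unfold util
    rw [Finset.sum_insert (by simp [hhX'j]), Finset.sum_erase_eq_sub hgX'j, hujh, hujg]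
    ring
  have hutill : util u l (X' l) ≤ util u l (X'' l) := by
    rw [hX''l]
    unfold util
    rw [Finset.sum_insert (by simp [hgX'l]), Finset.sum_erase_eq_sub hhX'l, hulh]
    have hbl : b l ≤ u l g := by
      rcases hbi l g with hh | hh <;> simp [hh, (hab l).le]
    linarith
  have hge : ∀ k, util u k (X' k) ≤ util u k (X'' k) := by
    intro k
    by_cases hkj : k = j
    · subst hkj; exact le_of_eq hutilj.symm
    · by_cases hkl : k = l
      · subst hkl; exact hutill
      · rw [hX''other k hkj hkl]
  have hX''dom : ParetoDominates u X'' X := by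
    refine ⟨fun k => le_trans (hX'dom.1 k) (hge k), ?_⟩
    obtain ⟨j0, hj0⟩ := hX'dom.2
    exact ⟨j0, lt_of_lt_of_le hj0 (hge j0)⟩
  -- transfer counts
  have hhXj' : ∀ k, h ∈ X k → k = j := fun k hk => uniq hX hk hhXj
  have hsub : {x : M | ∃ k, x ∈ X k ∧ x ∉ X'' k} ⊂ {x : M | ∃ k, x ∈ X k ∧ x ∉ X' k} := by
    constructor
    · rintro x ⟨k, hxk, hxk'⟩
      by_cases hxg : x = g
      · exact hxg ▸ ⟨i, hgXi, hgX'i⟩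
      · by_cases hxh : x = h
        · subst hxh
          exfalso
          have hk := hhXj' k hxk
          subst hk
          apply hxk'
          rw [mem_X'']
          simp [Ne.symm hgh]
        · refine ⟨k, hxk, ?_⟩
          intro hx'
          apply hxk'
          rw [mem_X'']
          simp [hxg, hxh, hx']
    · intro hsub'
      have hmem : h ∈ {x : M | ∃ k, x ∈ X k ∧ x ∉ X' k} := ⟨j, hhXj, hhX'j⟩
      obtain ⟨k, hk1, hk2⟩ := hsub' hmem
      have hk := hhXj' k hk1
      subst hk
      apply hk2
      rw [mem_X'']
      simp [Ne.symm hgh]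
  have hlt : transferCount X X'' < transferCount X X' := by
    unfold transferCount
    exact Set.ncard_lt_ncard hsub (Set.toFinite _)
  exact absurd (hminimal X'' hX''alloc hX''dom) (not_le.mpr hlt)
end

section
/- Let X be an allocation of a personalized bi-valued instance in which every ratio r_i = a_i/b_i is a positive integer. If X is Pareto-dominated by some allocation, then X admits a Type I witness or a Type II witness. -/
open Finset

/-- A Type I witness ("small-large exchange cycle") for an allocation `X`, w.r.t. a
personalized bi-valued profile where agent `i` values large goods at `a i` and small goods
at `b i`.  It consists of distinct agents `ag 0, …, ag (k-1)` (`k ≥ 2`, 0-indexed) and goods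
`g 0, …, g (k-1)` with `g t ∈ X (ag t)`, such that `g 0` is small for `ag 0` and large for
`ag 1`, the good `g t` is large for `ag t` and for `ag (t+1)` for `1 ≤ t ≤ k-2`, and it is
not the case that `g (k-1)` is large for `ag (k-1)` and small for `ag 0`. -/
def TypeIWitness {n : ℕ} {M : Type*} [DecidableEq M] (u : Fin n → M → ℝ)
    (a b : Fin n → ℝ) (X : Fin n → Finset M) : Prop :=
  ∃ (k : ℕ) (ag : ℕ → Fin n) (g : ℕ → M),
    2 ≤ k ∧
    (∀ s, s < k → ∀ t, t < k → s ≠ t → ag s ≠ ag t) ∧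
    (∀ t, t < k → g t ∈ X (ag t)) ∧
    u (ag 0) (g 0) = b (ag 0) ∧ u (ag 1) (g 0) = a (ag 1) ∧
    (∀ t, 1 ≤ t → t ≤ k - 2 →
      u (ag t) (g t) = a (ag t) ∧ u (ag (t + 1)) (g t) = a (ag (t + 1))) ∧
    ¬ (u (ag (k - 1)) (g (k - 1)) = a (ag (k - 1)) ∧ u (ag 0) (g (k - 1)) = b (ag 0))

/-- A Type II witness ("one-to-many exchange cycle") for an allocation `X`, w.r.t. a
personalized bi-valued profile where agent `i` values large goods at `a i` and small goods
at `b i`.  It consists of distinct agents `ag 0, …, ag (k-1)` (`k ≥ 2`, 0-indexed) with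
`r (ag 0) = a (ag 0) / b (ag 0)` a positive integer `R` and `r (ag 0) < r (ag (k-1))`,
`R` distinct goods `h 0, …, h (R-1) ∈ X (ag (k-1))` each small for `ag (k-1)` and for
`ag 0`, and goods `g 0, …, g (k-2)` with `g t ∈ X (ag t)` large for `ag t` and for
`ag (t+1)`. -/
def TypeIIWitness {n : ℕ} {M : Type*} [DecidableEq M] (u : Fin n → M → ℝ)
    (a b : Fin n → ℝ) (X : Fin n → Finset M) : Prop :=
  ∃ (k R : ℕ) (ag : ℕ → Fin n) (h : ℕ → M) (g : ℕ → M),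
    2 ≤ k ∧ 0 < R ∧
    (∀ s, s < k → ∀ t, t < k → s ≠ t → ag s ≠ ag t) ∧
    a (ag 0) / b (ag 0) = (R : ℝ) ∧
    a (ag 0) / b (ag 0) < a (ag (k - 1)) / b (ag (k - 1)) ∧
    (∀ j, j < R → ∀ j', j' < R → j ≠ j' → h j ≠ h j') ∧
    (∀ j, j < R →
      h j ∈ X (ag (k - 1)) ∧ u (ag (k - 1)) (h j) = b (ag (k - 1)) ∧
        u (ag 0) (h j) = b (ag 0)) ∧
    (∀ t, t < k - 1 →
      g t ∈ X (ag t) ∧ u (ag t) (g t) = a (ag t) ∧ u (ag (t + 1)) (g t) = a (ag (t + 1)))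


/-!
Fix a Pareto-improvement of `X` that transfers as few goods as possible and measure the utility
of agent `i` in units of `b i`, so that each good weighs `R i` or `1`. Minimality forbids
returning a single transferred good, rerouting two consecutive transfers, and undoing all
transfers out of a set of agents that no transferred good leaves. Hence no transfer is large for
its sender and small for its recipient, and, without a Type I witness, none is small for its
sender and large for its recipient either. So the gain of an agent `v` is `R v` times the net
number of large goods it receives plus the net number of small goods it receives. Give `v` the
potential `max (min (R x) (s x + 1))` over the agents `x` reachable from `v` along large goods
that give away `s x > 0` small goods. It does not increase along large transfers, and without a
Type II witness it is at most `R y` at every agent `y` receiving small goods. Weighing the net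
large transfers against it then bounds the total gain strictly by itself.
-/

open Function Relation Finset

theorem exists_seq_of_forall_lt {β : Type*} [Nonempty β] {m : ℕ} {q : ℕ → β → Prop}
    (h : ∀ t < m, ∃ g, q t g) : ∃ γ : ℕ → β, ∀ t < m, q t (γ t) := by
  have h' : ∀ t, ∃ g, t < m → q t g := fun t =>
    if ht : t < m then (h t ht).imp fun _ hg _ => hg
    else ⟨Classical.arbitrary β, fun h' => absurd h' ht⟩
  choose γ hγ using h'
  exact ⟨γ, hγ⟩

namespace Relation.ReflTransGen

variable {α : Type*} {r : α → α → Prop} {y x : α}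

theorem exists_path (h : ReflTransGen r y x) :
    ∃ (m : ℕ) (p : ℕ → α), p 0 = y ∧ p m = x ∧ ∀ t < m, r (p t) (p (t + 1)) := by
  induction h with
  | refl => exact ⟨0, fun _ => y, rfl, rfl, by omega⟩
  | @tail z w _ hzw ih =>
    obtain ⟨m, p, h0, hm, hp⟩ := ih
    refine ⟨m + 1, update p (m + 1) w, by simpa using h0, by simp, fun t ht => ?_⟩
    rcases (by omega : t < m ∨ t = m) with ht | rfl
    · simpa [update_apply, show t ≠ m + 1 by omega, ht.ne] using hp t ht
    · simpa [update_apply, hm] using hzw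

/-- Take a shortest path: a repeated vertex could be cut out. -/
theorem exists_injOn_path (h : ReflTransGen r y x) :
    ∃ (m : ℕ) (p : ℕ → α), p 0 = y ∧ p m = x ∧ (∀ t < m, r (p t) (p (t + 1))) ∧
      Set.InjOn p (Set.Iic m) := by
  classical
  have hex := h.exists_path
  obtain ⟨p, h0, hm, hp⟩ := Nat.find_spec hex
  refine ⟨_, p, h0, hm, hp, fun s hs t ht hst => ?_⟩
  by_contra hne
  wlog hlt : s < t generalizing s t
  · exact this t ht s hs hst.symm (Ne.symm hne) (by omega)
  simp only [Set.mem_Iic] at hs ht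
  set m := Nat.find hex
  refine Nat.find_min hex (m := m - (t - s)) (by omega)
    ⟨fun i => if i ≤ s then p i else p (i + (t - s)), by simpa using h0, ?_, fun i hi => ?_⟩
  · by_cases hts : t = m
    · dsimp only
      rw [if_pos (by omega), show m - (t - s) = s by omega, hst, hts, hm]
    · dsimp only
      rw [if_neg (by omega), show m - (t - s) + (t - s) = m by omega, hm]
  · rcases lt_trichotomy i s with his | rfl | his
    · simpa [his.le, show i + 1 ≤ s by omega] using hp i (by omega)
    · simpa [hst, show i + 1 + (t - i) = t + 1 by omega] using hp t (by omega)
    · simpa [show ¬i ≤ s by omega, show ¬i + 1 ≤ s by omega,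
        show i + 1 + (t - s) = i + (t - s) + 1 by omega] using hp (i + (t - s)) (by omega)

theorem of_path {m : ℕ} {p : ℕ → α} (hp : ∀ t < m, r (p t) (p (t + 1))) :
    ∀ t ≤ m, ReflTransGen r (p 0) (p t)
  | 0, _ => .refl
  | t + 1, ht => (of_path hp t (by omega)).tail (hp t ht)

end Relation.ReflTransGen

section Witnesses

variable {n : ℕ} {M : Type*} {u : Fin n → M → ℝ} {a b : Fin n → ℝ}
  {X : Fin n → Finset M}

variable (u a X) in
def LargeLink (v z : Fin n) : Prop :=
  ∃ g ∈ X v, u v g = a v ∧ u z g = a z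

theorem exists_largeLink_chain [Nonempty M] {y x : Fin n}
    (h : ReflTransGen (LargeLink u a X) y x) :
    ∃ (m : ℕ) (p : ℕ → Fin n) (γ : ℕ → M), p 0 = y ∧ p m = x ∧
      Set.InjOn p (Set.Iic m) ∧ (∀ t ≤ m, ReflTransGen (LargeLink u a X) y (p t)) ∧
      ∀ t < m, γ t ∈ X (p t) ∧ u (p t) (γ t) = a (p t) ∧
        u (p (t + 1)) (γ t) = a (p (t + 1)) := by
  obtain ⟨m, p, h0, hm, hp, hinj⟩ := h.exists_injOn_path
  obtain ⟨γ, hγ⟩ := exists_seq_of_forall_lt hp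
  exact ⟨m, p, γ, h0, hm, hinj, h0 ▸ ReflTransGen.of_path hp, hγ⟩

theorem typeIWitness_of_chain [DecidableEq M] {m : ℕ} {p : ℕ → Fin n}
    (hp : Set.InjOn p (Set.Iic m))
    {s : Fin n} (hs : ∀ t ≤ m, p t ≠ s) {h : M} (hh : h ∈ X s) (hhs : u s h = b s)
    (hhp : u (p 0) h = a (p 0)) {γ : ℕ → M}
    (hγ : ∀ t < m, γ t ∈ X (p t) ∧ u (p t) (γ t) = a (p t) ∧
      u (p (t + 1)) (γ t) = a (p (t + 1)))
    {g : M} (hg : g ∈ X (p m)) (hfin : ¬(u (p m) g = a (p m) ∧ u s g = b s)) :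
    TypeIWitness u a b X := by
  refine ⟨m + 2, fun | 0 => s | t + 1 => p t, fun | 0 => h | t + 1 => if t < m then γ t else g,
    by omega, ?_, ?_, hhs, hhp, ?_, by simpa using hfin⟩
  · rintro (_ | s') hs' (_ | t') ht' hne
    · exact absurd rfl hne
    · exact (hs t' (by omega)).symm
    · exact hs s' (by omega)
    · exact fun heq => hne (congrArg (· + 1) (hp (by simp; omega) (by simp; omega) heq))
  · rintro (_ | t) ht
    · exact hh
    · by_cases htm : t < m
      · simpa [htm] using (hγ t htm).1
      · simpa [htm, show t = m by omega] using hg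
  · rintro (_ | t) ht1 ht2
    · omega
    · simpa [show t < m by omega] using (hγ t (by omega)).2

theorem typeIIWitness_of_chain [DecidableEq M] {m : ℕ} (hm : 0 < m) {p : ℕ → Fin n}
    (hp : Set.InjOn p (Set.Iic m)) {γ : ℕ → M}
    (hγ : ∀ t < m, γ t ∈ X (p t) ∧ u (p t) (γ t) = a (p t) ∧
      u (p (t + 1)) (γ t) = a (p (t + 1)))
    {R : ℕ} (hR : 0 < R) (hR0 : a (p 0) / b (p 0) = R)
    (hlt : a (p 0) / b (p 0) < a (p m) / b (p m)) {H : Finset M} (hH : R ≤ H.card)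
    (hHX : ∀ h ∈ H, h ∈ X (p m) ∧ u (p m) h = b (p m) ∧ u (p 0) h = b (p 0)) :
    TypeIIWitness u a b X := by
  obtain ⟨h₀, -⟩ := card_pos.mp (hR.trans_le hH)
  let hseq : ℕ → M := fun j => if hj : j < H.card then H.equivFin.symm ⟨j, hj⟩ else h₀
  have hseq_mem : ∀ j < R, hseq j ∈ H := fun j hj => by simp [hseq, show j < H.card by omega]
  refine ⟨m + 1, R, p, hseq, γ, by omega, hR, fun s hs t ht hne heq => hne ?_, hR0,
    by simpa using hlt, fun j hj j' hj' hne heq => hne ?_,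
    fun j hj => by simpa using hHX _ (hseq_mem j hj), fun t ht => hγ t (by omega)⟩
  · exact hp (by simp; omega) (by simp; omega) heq
  · simpa [hseq, show j < H.card by omega, show j' < H.card by omega, Subtype.ext_iff] using heq

variable {y x : Fin n}

theorem typeIWitness_of_reaches_back [DecidableEq M] (hyx : ReflTransGen (LargeLink u a X) y x)
    (hne : y ≠ x) {h : M} (hh : h ∈ X x) (hhx : u x h = b x) (hhy : u y h = a y)
    (hab : a x ≠ b x) :
    TypeIWitness u a b X := by
  have : Nonempty M := ⟨h⟩
  obtain ⟨m, p, γ, h0, hm, hinj, -, hγ⟩ := exists_largeLink_chain hyx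
  have hm0 : m ≠ 0 := by rintro rfl; exact hne (h0.symm.trans hm)
  have hγ' := hγ (m - 1) (by omega)
  rw [show m - 1 + 1 = m by omega, hm] at hγ'
  refine typeIWitness_of_chain (m := m - 1) (hinj.mono (Set.Iic_subset_Iic.mpr (by omega)))
    (fun t ht heq => ?_) hh hhx (h0 ▸ hhy) (fun t ht => hγ t (by omega)) hγ'.1
    fun hfin => hab (hγ'.2.2.symm.trans hfin.2)
  exact absurd (hinj (by simp; omega) (by simp) (heq.trans hm.symm)) (by omega)

theorem typeIWitness_of_reaches [DecidableEq M] {s : Fin n}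
    (hyx : ReflTransGen (LargeLink u a X) y x) (hs : ¬ReflTransGen (LargeLink u a X) y s)
    {h : M} (hh : h ∈ X s) (hhs : u s h = b s) (hhy : u y h = a y) {g : M} (hg : g ∈ X x)
    (hgx : u x g = b x) (hab : a x ≠ b x) :
    TypeIWitness u a b X := by
  have : Nonempty M := ⟨h⟩
  obtain ⟨m, p, γ, rfl, rfl, hinj, hreach, hγ⟩ := exists_largeLink_chain hyx
  exact typeIWitness_of_chain (s := s) hinj (fun t ht heq => hs (heq ▸ hreach t ht)) hh hhs hhy
    hγ hg fun hfin => hab (hfin.1.symm.trans hgx)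

theorem typeIIWitness_of_reaches [DecidableEq M] (hyx : ReflTransGen (LargeLink u a X) y x)
    (hne : y ≠ x) {R : ℕ} (hR : 0 < R) (hRy : a y / b y = R) (hlt : a y / b y < a x / b x)
    {H : Finset M} (hH : R ≤ H.card)
    (hHX : ∀ h ∈ H, h ∈ X x ∧ u x h = b x ∧ u y h = b y) :
    TypeIIWitness u a b X := by
  obtain ⟨h₀, -⟩ := card_pos.mp (hR.trans_le hH)
  have : Nonempty M := ⟨h₀⟩
  obtain ⟨m, p, γ, rfl, rfl, hinj, -, hγ⟩ := exists_largeLink_chain hyx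
  exact typeIIWitness_of_chain (Nat.pos_of_ne_zero fun hm => hne (by rw [hm])) hinj hγ hR hRy hlt
    hH hHX

end Witnesses

structure IntRatioProfile (n : ℕ) (M : Type*) where
  u : Fin n → M → ℝ
  a : Fin n → ℝ
  b : Fin n → ℝ
  R : Fin n → ℕ
  b_pos : ∀ i, 0 < b i
  one_lt_R : ∀ i, 1 < R i
  a_eq : ∀ i, a i = R i * b i
  u_eq_or : ∀ i g, u i g = a i ∨ u i g = b i

def alloc {n : ℕ} {M : Type*} [Fintype M] (o : M → Fin n) (i : Fin n) : Finset M :=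
  {g | o g = i}

@[simp]
theorem mem_alloc {n : ℕ} {M : Type*} [Fintype M] {o : M → Fin n} {i : Fin n} {g : M} :
    g ∈ alloc o i ↔ o g = i := by
  simp [alloc]

theorem IsAllocation.exists_eq_alloc {n : ℕ} {M : Type*} [Fintype M] [DecidableEq M]
    {X : Fin n → Finset M} (hX : IsAllocation X) : ∃ o : M → Fin n, X = alloc o := by
  choose o ho using hX.1
  refine ⟨o, funext fun i => Finset.ext fun g =>
    ⟨fun hg => mem_alloc.mpr ?_, fun hg => mem_alloc.mp hg ▸ ho g⟩⟩
  by_contra hne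
  exact Finset.disjoint_left.mp (hX.2 _ _ hne) (ho g) hg

def transfers {M ι : Type*} [Fintype M] [DecidableEq ι] (o o' : M → ι) : Finset M :=
  {g | o g ≠ o' g}

@[simp]
theorem mem_transfers {M ι : Type*} [Fintype M] [DecidableEq ι] {o o' : M → ι} {g : M} :
    g ∈ transfers o o' ↔ o g ≠ o' g := by
  simp [transfers]

namespace IntRatioProfile

variable {n : ℕ} {M : Type*} (P : IntRatioProfile n M)

def IsLarge (i : Fin n) (g : M) : Prop :=
  P.u i g = P.a i

noncomputable instance (i : Fin n) (g : M) : Decidable (P.IsLarge i g) :=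
  inferInstanceAs (Decidable (P.u i g = P.a i))

theorem b_lt_a (i : Fin n) : P.b i < P.a i := by
  have := P.b_pos i
  have : (1 : ℝ) < P.R i := by exact_mod_cast P.one_lt_R i
  rw [P.a_eq]
  nlinarith

theorem not_isLarge_iff {i : Fin n} {g : M} : ¬P.IsLarge i g ↔ P.u i g = P.b i := by
  rcases P.u_eq_or i g with h | h <;> simp [IsLarge, h, (P.b_lt_a i).ne, (P.b_lt_a i).ne']

theorem ratio_eq (i : Fin n) : P.a i / P.b i = P.R i := by
  rw [P.a_eq, mul_div_cancel_right₀ _ (P.b_pos i).ne']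

noncomputable def weight (i : Fin n) (g : M) : ℕ :=
  if P.IsLarge i g then P.R i else 1

variable {P}

theorem weight_of_isLarge {i : Fin n} {g : M} (h : P.IsLarge i g) : P.weight i g = P.R i :=
  if_pos h

theorem weight_of_not_isLarge {i : Fin n} {g : M} (h : ¬P.IsLarge i g) : P.weight i g = 1 :=
  if_neg h

variable (P)

theorem one_le_weight (i : Fin n) (g : M) : 1 ≤ P.weight i g := by
  unfold weight; split_ifs <;> have := P.one_lt_R i <;> omega

theorem weight_le_R (i : Fin n) (g : M) : P.weight i g ≤ P.R i := by
  unfold weight; split_ifs <;> have := P.one_lt_R i <;> omega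

theorem u_eq_b_mul_weight (i : Fin n) (g : M) : P.u i g = P.b i * P.weight i g := by
  by_cases h : P.IsLarge i g
  · rw [weight_of_isLarge h, h, P.a_eq, mul_comm]
  · rw [weight_of_not_isLarge h, P.not_isLarge_iff.mp h, Nat.cast_one, mul_one]

noncomputable def contrib (o : M → Fin n) (i : Fin n) (g : M) : ℕ :=
  if o g = i then P.weight i g else 0

variable [Fintype M]

noncomputable def value (o : M → Fin n) (i : Fin n) : ℕ :=
  ∑ g, P.contrib o i g

theorem util_alloc [DecidableEq M] (o : M → Fin n) (i : Fin n) :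
    util P.u i (alloc o i) = P.b i * P.value o i := by
  simp only [util, value, contrib, alloc, Finset.sum_filter, P.u_eq_b_mul_weight, Nat.cast_sum,
    Finset.mul_sum]
  exact Finset.sum_congr rfl fun g _ => by split_ifs <;> simp

def Dominates (o' o : M → Fin n) : Prop :=
  (∀ i, P.value o i ≤ P.value o' i) ∧ ∃ j, P.value o j < P.value o' j

theorem dominates_of_paretoDominates [DecidableEq M] {o o' : M → Fin n}
    (h : ParetoDominates P.u (alloc o') (alloc o)) : P.Dominates o' o := by
  simp only [ParetoDominates, util_alloc, mul_le_mul_iff_right₀ (P.b_pos _),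
    mul_lt_mul_iff_right₀ (P.b_pos _), Nat.cast_le, Nat.cast_lt] at h
  exact h

def IsMinimalImprovement (o o' : M → Fin n) : Prop :=
  P.Dominates o' o ∧ ∀ f, P.Dominates f o → #(transfers o o') ≤ #(transfers o f)

theorem exists_isMinimalImprovement {o o' : M → Fin n} (h : P.Dominates o' o) :
    ∃ o'', P.IsMinimalImprovement o o'' := by
  obtain ⟨o'', ho'', hmin⟩ :=
    (measure fun f => #(transfers o f)).wf.has_min {f | P.Dominates f o} ⟨o', h⟩
  exact ⟨o'', ho'', fun f hf => not_lt.mp (hmin f hf)⟩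

noncomputable def gain (o o' : M → Fin n) (i : Fin n) : ℤ :=
  P.value o' i - P.value o i

theorem gain_eq_sum (o o' : M → Fin n) (i : Fin n) :
    P.gain o o' i = ∑ g, ((P.contrib o' i g : ℤ) - P.contrib o i g) := by
  simp [gain, value, Finset.sum_sub_distrib]

theorem value_update_add [DecidableEq M] (f : M → Fin n) (g : M) (j i : Fin n) :
    P.value (update f g j) i + P.contrib f i g =
      P.value f i + (if j = i then P.weight i g else 0) := by
  simp only [value, ← Finset.add_sum_erase _ _ (Finset.mem_univ g), contrib, update_self]
  rw [Finset.sum_congr rfl fun h hh => by rw [update_of_ne (Finset.ne_of_mem_erase hh)]]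
  ring

end IntRatioProfile

theorem transfers_update_self_subset {M ι : Type*} [Fintype M] [DecidableEq M] [DecidableEq ι]
    (o f : M → ι) (g : M) : transfers o (update f g (o g)) ⊆ transfers o f := by
  intro x
  rcases eq_or_ne x g with rfl | hx <;> simp [update_of_ne, *]

theorem transfers_update_subset {M ι : Type*} [Fintype M] [DecidableEq M] [DecidableEq ι]
    (o f : M → ι) (g : M) (j : ι) :
    transfers o (update f g j) ⊆ insert g (transfers o f) := by
  intro x
  rcases eq_or_ne x g with rfl | hx <;> simp [update_of_ne, *]

namespace IntRatioProfile.IsMinimalImprovement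

variable {n : ℕ} {M : Type*} [Fintype M] {P : IntRatioProfile n M} {o o' : M → Fin n}

theorem gain_nonneg (h : P.IsMinimalImprovement o o') (i : Fin n) : 0 ≤ P.gain o o' i := by
  have := h.1.1 i
  unfold gain
  omega

theorem exists_gain_pos (h : P.IsMinimalImprovement o o') : ∃ j, 0 < P.gain o o' j := by
  obtain ⟨j, hj⟩ := h.1.2
  exact ⟨j, by unfold gain; omega⟩

theorem false_of_dominates (h : P.IsMinimalImprovement o o') {f : M → Fin n}
    (hf : P.Dominates f o) (hsub : transfers o f ⊆ transfers o o') {g : M}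
    (hg : g ∈ transfers o o') (hgf : o g = f g) : False := by
  have := h.2 f hf
  have := Finset.card_lt_card ⟨hsub, fun hsup => mem_transfers.mp (hsup hg) hgf⟩
  omega

theorem false_of_le (h : P.IsMinimalImprovement o o') {f : M → Fin n}
    (hf : ∀ i, P.value o' i ≤ P.value f i) (hsub : transfers o f ⊆ transfers o o') {g : M}
    (hg : g ∈ transfers o o') (hgf : o g = f g) : False :=
  h.false_of_dominates
    ⟨fun i => (h.1.1 i).trans (hf i), h.1.2.imp fun j hj => hj.trans_le (hf j)⟩ hsub hg hgf

/-- Otherwise returning `g` to its former owner would be a smaller improvement. -/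
theorem gain_lt_weight [DecidableEq M] (h : P.IsMinimalImprovement o o') {g : M}
    (hg : g ∈ transfers o o') : P.gain o o' (o' g) < P.weight (o' g) g := by
  by_contra hw
  rw [mem_transfers] at hg
  refine h.false_of_dominates (f := update o' g (o g)) ⟨fun i => ?_, o g, ?_⟩
    (transfers_update_self_subset o o' g) (mem_transfers.mpr hg) (by simp)
  · have hv := P.value_update_add o' g (o g) i
    have := h.gain_nonneg i
    unfold contrib gain at *
    rcases eq_or_ne (o' g) i with rfl | hi
    · simp only [if_pos, if_neg hg] at hv
      omega
    · simp only [if_neg hi] at hv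
      omega
  · have hv := P.value_update_add o' g (o g) (o g)
    have := h.gain_nonneg (o g)
    have := P.one_le_weight (o g) g
    unfold contrib gain at *
    simp only [if_pos, if_neg (Ne.symm hg)] at hv
    omega

theorem exists_in_of_out (h : P.IsMinimalImprovement o o') {g' : M}
    (hg' : g' ∈ transfers o o') : ∃ g ∈ transfers o o', o' g = o g' := by
  by_contra hnone
  push Not at hnone
  refine (h.gain_nonneg (o g')).not_gt ?_
  rw [gain_eq_sum, ← Finset.sum_const_zero]
  refine Finset.sum_lt_sum (fun x _ => ?_) ⟨g', Finset.mem_univ _, ?_⟩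
  · by_cases hx : o' x = o g'
    · have : o x = o' x := by_contra fun hne => hnone x (mem_transfers.mpr hne) hx
      simp [contrib, this]
    · simp only [contrib, if_neg hx]
      split_ifs <;> simp
  · simpa [contrib, Ne.symm (mem_transfers.mp hg')] using
      zero_lt_one.trans_le (P.one_le_weight (o g') g')

theorem exists_out_of_in [DecidableEq M] (h : P.IsMinimalImprovement o o') {g : M}
    (hg : g ∈ transfers o o') : ∃ g' ∈ transfers o o', o g' = o' g := by
  by_contra hnone
  push Not at hnone
  refine (h.gain_lt_weight hg).not_ge ?_
  rw [gain_eq_sum]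
  have hterm : ∀ x, 0 ≤ (P.contrib o' (o' g) x : ℤ) - P.contrib o (o' g) x := fun x => by
    by_cases hx : o x = o' g
    · have : o x = o' x := by_contra fun hne => hnone x (mem_transfers.mpr hne) hx
      simp [contrib, this]
    · simp only [contrib, if_neg hx]
      split_ifs <;> simp
  simpa [contrib, mem_transfers.mp hg] using
    Finset.single_le_sum (fun x _ => hterm x) (Finset.mem_univ g)

/-- If `x = o g'` values `g'` at least as much as the good `g` it receives, handing `g` on to
`y = o' g'` and leaving `g'` with `x` saves a transfer; so `y` must strictly prefer `g'`. -/
theorem weight_lt_weight_of_consecutive [DecidableEq M] (h : P.IsMinimalImprovement o o')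
    {g g' : M} (hg : g ∈ transfers o o') (hg' : g' ∈ transfers o o') (hne : g ≠ g')
    (hx : o' g = o g') (hw : P.weight (o g') g ≤ P.weight (o g') g') :
    P.weight (o' g') g < P.weight (o' g') g' := by
  by_contra hw'
  have hxy : o g' ≠ o' g' := mem_transfers.mp hg'
  refine h.false_of_le (f := update (update o' g (o' g')) g' (o g')) (fun i => ?_)
    ((transfers_update_self_subset ..).trans ?_) hg' (by simp)
  · have e1 := P.value_update_add (update o' g (o' g')) g' (o g') i
    have e2 := P.value_update_add o' g (o' g') i
    simp only [contrib, update_of_ne hne.symm, hx] at e1 e2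
    rcases eq_or_ne (o g') i with rfl | hi
    · simp only [if_pos, if_neg hxy.symm] at e1 e2
      omega
    · rcases eq_or_ne (o' g') i with rfl | hi'
      · simp only [if_pos, if_neg hxy] at e1 e2
        omega
      · simp only [if_neg hi, if_neg hi'] at e1 e2
        omega
  · exact (transfers_update_subset ..).trans (Finset.insert_eq_of_mem hg).le

theorem isLarge_of_isLarge [DecidableEq M] (h : P.IsMinimalImprovement o o') {g' : M}
    (hg' : g' ∈ transfers o o') (hl : P.IsLarge (o g') g') : P.IsLarge (o' g') g' := by
  by_contra hs
  obtain ⟨g, hg, hx⟩ := h.exists_in_of_out hg'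
  have hne : g ≠ g' := by rintro rfl; exact mem_transfers.mp hg' hx.symm
  have := h.weight_lt_weight_of_consecutive hg hg' hne hx
    (by rw [weight_of_isLarge hl]; exact P.weight_le_R _ _)
  rw [weight_of_not_isLarge hs] at this
  have := P.one_le_weight (o' g') g
  omega

theorem isLarge_of_consecutive_small [DecidableEq M] (h : P.IsMinimalImprovement o o')
    {g g' : M} (hg : g ∈ transfers o o') (hg' : g' ∈ transfers o o') (hx : o' g = o g')
    (hs : ¬P.IsLarge (o g') g') (hs' : ¬P.IsLarge (o' g') g') : P.IsLarge (o g') g := by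
  by_contra hsg
  have hne : g ≠ g' := by rintro rfl; exact mem_transfers.mp hg' hx.symm
  have := h.weight_lt_weight_of_consecutive hg hg' hne hx
    (by rw [weight_of_not_isLarge hsg, weight_of_not_isLarge hs])
  rw [weight_of_not_isLarge hs'] at this
  have := P.one_le_weight (o' g') g
  omega

/-- Undoing every transfer out of a set `A` that no transferred good leaves keeps everyone as
well off as under `o`, and strictly better off whoever receives a good from outside `A`. -/
theorem false_of_closed (h : P.IsMinimalImprovement o o') (A : Set (Fin n))
    (hA : ∀ g ∈ transfers o o', o g ∈ A → o' g ∈ A) {g : M} (hg : g ∈ transfers o o')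
    (hgA : o g ∈ A) {g' : M} (hg'A : o g' ∉ A) (hg'A' : o' g' ∈ A) : False := by
  classical
  let f : M → Fin n := fun x => if o x ∈ A then o x else o' x
  have hout : ∀ i ∉ A, ∀ x, P.contrib f i x = P.contrib o' i x := fun i hi x => by
    by_cases hx : o x ∈ A
    · have : o' x ∈ A := by
        by_cases hxx : o x = o' x
        · exact hxx ▸ hx
        · exact hA x (mem_transfers.mpr hxx) hx
      simp [contrib, f, hx, show o x ≠ i from fun h => hi (h ▸ hx),
        show o' x ≠ i from fun h => hi (h ▸ this)]
    · simp [contrib, f, hx]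
  have hin : ∀ i ∈ A, ∀ x, P.contrib o i x ≤ P.contrib f i x := fun i hi x => by
    by_cases hx : o x = i
    · simp [contrib, f, hx, hi]
    · simp [contrib, hx]
  refine h.false_of_dominates (f := f) ⟨fun i => ?_, o' g', ?_⟩ (fun x => ?_) hg
    (by simp [f, hgA])
  · by_cases hi : i ∈ A
    · exact Finset.sum_le_sum fun x _ => hin i hi x
    · calc P.value o i ≤ P.value o' i := h.1.1 i
        _ = P.value f i := Finset.sum_congr rfl fun x _ => (hout i hi x).symm
  · refine Finset.sum_lt_sum (fun x _ => hin _ hg'A' x) ⟨g', Finset.mem_univ _, ?_⟩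
    simpa [contrib, f, hg'A, show o g' ≠ o' g' from fun h => hg'A (h ▸ hg'A')] using
      zero_lt_one.trans_le (P.one_le_weight (o' g') g')
  · by_cases hx : o x ∈ A <;> simp [f, hx]

end IntRatioProfile.IsMinimalImprovement

namespace IntRatioProfile.IsMinimalImprovement

variable {n : ℕ} {M : Type*} [Fintype M] [DecidableEq M] {P : IntRatioProfile n M}
  {o o' : M → Fin n}

/-- Otherwise, by `hI`, the sender is not reachable from the recipient along large goods, and the
agents that are reachable give away only goods large for them; so no transferred good leaves
the reachable agents, against `false_of_closed`. -/
theorem isLarge_of_isLarge_dest (h : P.IsMinimalImprovement o o')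
    (hI : ¬TypeIWitness P.u P.a P.b (alloc o)) {g : M} (hg : g ∈ transfers o o')
    (hl : P.IsLarge (o' g) g) : P.IsLarge (o g) g := by
  by_contra hs
  rw [P.not_isLarge_iff] at hs
  have hback : ¬ReflTransGen (LargeLink P.u P.a (alloc o)) (o' g) (o g) := fun hr =>
    hI (typeIWitness_of_reaches_back hr (mem_transfers.mp hg).symm (mem_alloc.mpr rfl) hs hl
      (P.b_lt_a _).ne')
  have hlarge : ∀ g' ∈ transfers o o',
      ReflTransGen (LargeLink P.u P.a (alloc o)) (o' g) (o g') → P.IsLarge (o g') g' :=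
    fun g' _ hr => by_contra fun hs' =>
      hI (typeIWitness_of_reaches hr hback (mem_alloc.mpr rfl) hs hl (mem_alloc.mpr rfl)
        (P.not_isLarge_iff.mp hs') (P.b_lt_a _).ne')
  obtain ⟨g', hg', hg'o⟩ := h.exists_out_of_in hg
  refine h.false_of_closed {x | ReflTransGen (LargeLink P.u P.a (alloc o)) (o' g) x}
    (fun g' hg' hr => hr.tail ⟨g', mem_alloc.mpr rfl, hlarge g' hg' hr,
      h.isLarge_of_isLarge hg' (hlarge g' hg' hr)⟩) hg' (hg'o ▸ .refl) (g' := g) hback .refl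

theorem isLarge_iff (h : P.IsMinimalImprovement o o') (hI : ¬TypeIWitness P.u P.a P.b (alloc o))
    {g : M} (hg : g ∈ transfers o o') : P.IsLarge (o g) g ↔ P.IsLarge (o' g) g :=
  ⟨h.isLarge_of_isLarge hg, h.isLarge_of_isLarge_dest hI hg⟩

end IntRatioProfile.IsMinimalImprovement

theorem Finset.sum_mul_card_fiber {ι κ : Type*} [Fintype κ] [DecidableEq κ] (s : Finset ι)
    (f : ι → κ) (φ : κ → ℤ) :
    ∑ v, φ v * #{x ∈ s | f x = v} = ∑ x ∈ s, φ (f x) := by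
  rw [← Finset.sum_fiberwise s f]
  refine Finset.sum_congr rfl fun v _ => ?_
  rw [Finset.sum_congr rfl fun x hx => by rw [(Finset.mem_filter.mp hx).2], Finset.sum_const,
    nsmul_eq_mul, mul_comm]

namespace IntRatioProfile

variable {n : ℕ} {M : Type*} [Fintype M] (P : IntRatioProfile n M) (o o' : M → Fin n)

noncomputable def smallTransfers : Finset M :=
  {g ∈ transfers o o' | ¬P.IsLarge (o g) g}

noncomputable def largeTransfers : Finset M :=
  {g ∈ transfers o o' | P.IsLarge (o g) g}

noncomputable def smallOut (v : Fin n) : ℕ :=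
  #{g ∈ P.smallTransfers o o' | o g = v}

noncomputable def smallIn (v : Fin n) : ℕ :=
  #{g ∈ P.smallTransfers o o' | o' g = v}

noncomputable def largeNet (v : Fin n) : ℤ :=
  #{g ∈ P.largeTransfers o o' | o' g = v} - #{g ∈ P.largeTransfers o o' | o g = v}

noncomputable def threshold (v : Fin n) : ℕ :=
  min (P.R v) (P.smallOut o o' v + 1)

open Classical in
noncomputable def potential (v : Fin n) : ℕ :=
  ({x | 0 < P.smallOut o o' x ∧ ReflTransGen (LargeLink P.u P.a (alloc o)) v x} :
    Finset (Fin n)).sup (P.threshold o o')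

variable {P o o'}

theorem gain_eq_of_isLarge_iff
    (hiff : ∀ g ∈ transfers o o', P.IsLarge (o g) g ↔ P.IsLarge (o' g) g) (v : Fin n) :
    P.gain o o' v = P.R v * P.largeNet o o' v + P.smallIn o o' v - P.smallOut o o' v := by
  have hlarge : ∀ g ∈ P.largeTransfers o o', (P.contrib o' v g : ℤ) - P.contrib o v g =
      P.R v * ((if o' g = v then 1 else 0) - (if o g = v then 1 else 0)) := fun g hg => by
    obtain ⟨hgE, hl⟩ := Finset.mem_filter.mp hg
    have hne := mem_transfers.mp hgE
    by_cases h1 : o' g = v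
    · subst h1
      simp [contrib, hne, weight_of_isLarge ((hiff g hgE).mp hl)]
    · by_cases h2 : o g = v
      · subst h2
        simp [contrib, h1, weight_of_isLarge hl]
      · simp [contrib, h1, h2]
  have hsmall : ∀ g ∈ P.smallTransfers o o', (P.contrib o' v g : ℤ) - P.contrib o v g =
      (if o' g = v then 1 else 0) - (if o g = v then 1 else 0) := fun g hg => by
    obtain ⟨hgE, hs⟩ := Finset.mem_filter.mp hg
    have hne := mem_transfers.mp hgE
    by_cases h1 : o' g = v
    · subst h1
      simp [contrib, hne, weight_of_not_isLarge (mt (hiff g hgE).mpr hs)]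
    · by_cases h2 : o g = v
      · subst h2
        simp [contrib, h1, weight_of_not_isLarge hs]
      · simp [contrib, h1, h2]
  rw [gain_eq_sum, ← Finset.sum_subset (Finset.subset_univ (transfers o o')) fun g _ hg => by
      simp [contrib, show o g = o' g by simpa using hg],
    ← Finset.sum_filter_add_sum_filter_not _ (fun g => P.IsLarge (o g) g)]
  change ∑ g ∈ P.largeTransfers o o', _ + ∑ g ∈ P.smallTransfers o o', _ = _
  rw [Finset.sum_congr rfl hlarge, Finset.sum_congr rfl hsmall, ← Finset.mul_sum]
  simp only [largeNet, smallIn, smallOut, Finset.sum_sub_distrib, Finset.sum_boole]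
  ring

theorem sum_smallIn_eq_sum_smallOut :
    ∑ v, (P.smallIn o o' v : ℤ) = ∑ v, (P.smallOut o o' v : ℤ) := by
  simp only [smallIn, smallOut]
  exact_mod_cast (Finset.card_eq_sum_card_fiberwise (fun _ _ => Finset.mem_univ _)).symm.trans
    (Finset.card_eq_sum_card_fiberwise fun _ _ => Finset.mem_univ _)

theorem sum_mul_largeNet (φ : Fin n → ℤ) :
    ∑ v, φ v * P.largeNet o o' v = ∑ g ∈ P.largeTransfers o o', (φ (o' g) - φ (o g)) := by
  simp only [largeNet, mul_sub, Finset.sum_sub_distrib, Finset.sum_mul_card_fiber]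

theorem potential_le_of_largeLink {v z : Fin n} (h : LargeLink P.u P.a (alloc o) v z) :
    P.potential o o' z ≤ P.potential o o' v :=
  Finset.sup_mono fun x hx => by
    simp only [Finset.mem_filter, Finset.mem_univ, true_and] at hx ⊢
    exact ⟨hx.1, hx.2.head h⟩

theorem threshold_le_potential {v : Fin n} (hv : 0 < P.smallOut o o' v) :
    P.threshold o o' v ≤ P.potential o o' v :=
  Finset.le_sup (by simpa using ⟨hv, .refl⟩)

end IntRatioProfile

namespace IntRatioProfile.IsMinimalImprovement

variable {n : ℕ} {M : Type*} [Fintype M] [DecidableEq M] {P : IntRatioProfile n M}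
  {o o' : M → Fin n} {v : Fin n}

theorem gain_eq (h : P.IsMinimalImprovement o o') (hI : ¬TypeIWitness P.u P.a P.b (alloc o))
    (v : Fin n) :
    P.gain o o' v = P.R v * P.largeNet o o' v + P.smallIn o o' v - P.smallOut o o' v :=
  gain_eq_of_isLarge_iff (fun _ hg => h.isLarge_iff hI hg) v

theorem smallIn_eq_zero_of_smallOut_pos (h : P.IsMinimalImprovement o o')
    (hI : ¬TypeIWitness P.u P.a P.b (alloc o)) (hv : 0 < P.smallOut o o' v) :
    P.smallIn o o' v = 0 := by
  by_contra hin
  obtain ⟨g', hg'⟩ := Finset.card_pos.mp hv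
  obtain ⟨g, hg⟩ := Finset.card_pos.mp (Nat.pos_of_ne_zero hin)
  simp only [smallTransfers, Finset.mem_filter] at hg hg'
  have hx : o' g = o g' := hg.2.trans hg'.2.symm
  have hl := h.isLarge_of_consecutive_small hg.1.1 hg'.1.1 hx hg'.1.2
    (mt (h.isLarge_iff hI hg'.1.1).mpr hg'.1.2)
  rw [← hx] at hl
  exact hg.1.2 ((h.isLarge_iff hI hg.1.1).mpr hl)

theorem gain_eq_zero_of_smallIn_pos (h : P.IsMinimalImprovement o o')
    (hI : ¬TypeIWitness P.u P.a P.b (alloc o)) (hv : 0 < P.smallIn o o' v) :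
    P.gain o o' v = 0 := by
  obtain ⟨g, hg⟩ := Finset.card_pos.mp hv
  simp only [smallTransfers, Finset.mem_filter] at hg
  have := h.gain_lt_weight hg.1.1
  rw [weight_of_not_isLarge (mt (h.isLarge_iff hI hg.1.1).mpr hg.1.2), hg.2] at this
  have := h.gain_nonneg v
  omega

theorem largeNet_pos_of_smallOut_pos (h : P.IsMinimalImprovement o o')
    (hI : ¬TypeIWitness P.u P.a P.b (alloc o)) (hv : 0 < P.smallOut o o' v) :
    0 < P.largeNet o o' v := by
  have hgain := h.gain_eq hI v
  rw [h.smallIn_eq_zero_of_smallOut_pos hI hv] at hgain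
  have := h.gain_nonneg v
  by_contra hn
  have := mul_nonpos_of_nonneg_of_nonpos (Nat.cast_nonneg (P.R v)) (not_lt.mp hn)
  omega

theorem largeNet_nonpos_of_smallIn_pos (h : P.IsMinimalImprovement o o')
    (hI : ¬TypeIWitness P.u P.a P.b (alloc o)) (hv : 0 < P.smallIn o o' v) :
    P.largeNet o o' v ≤ 0 := by
  have hout : P.smallOut o o' v = 0 := by
    by_contra h0
    exact hv.ne' (h.smallIn_eq_zero_of_smallOut_pos hI (Nat.pos_of_ne_zero h0))
  have hgain := h.gain_eq hI v
  rw [h.gain_eq_zero_of_smallIn_pos hI hv, hout] at hgain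
  by_contra hn
  have := mul_nonneg (Nat.cast_nonneg (P.R v)) (not_le.mp hn).le
  omega

theorem largeNet_eq_zero_of_smallOut_eq_zero (h : P.IsMinimalImprovement o o')
    (hI : ¬TypeIWitness P.u P.a P.b (alloc o)) (hout : P.smallOut o o' v = 0)
    (hin : P.smallIn o o' v = 0) : P.largeNet o o' v = 0 := by
  have hgain := h.gain_eq hI v
  rw [hout, hin] at hgain
  have hR : (1 : ℤ) < P.R v := by exact_mod_cast P.one_lt_R v
  rcases lt_trichotomy (P.largeNet o o' v) 0 with hn | hn | hn
  · have := h.gain_nonneg v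
    nlinarith
  · exact hn
  · obtain ⟨g, hg⟩ := Finset.card_pos.mp (show 0 < #{g ∈ P.largeTransfers o o' | o' g = v} by
      unfold largeNet at hn
      omega)
    simp only [largeTransfers, Finset.mem_filter] at hg
    have := h.gain_lt_weight hg.1.1
    rw [weight_of_isLarge ((h.isLarge_iff hI hg.1.1).mp hg.1.2), hg.2] at this
    nlinarith

/-- Otherwise some `x` reachable from `y` has `R y < R x` and gives away at least `R y` small
goods; these complete a Type I witness if one of them is large for `y`, and a Type II witness if
not. -/
theorem potential_le_R_of_smallIn_pos (h : P.IsMinimalImprovement o o')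
    (hI : ¬TypeIWitness P.u P.a P.b (alloc o)) (hII : ¬TypeIIWitness P.u P.a P.b (alloc o))
    {y : Fin n} (hy : 0 < P.smallIn o o' y) : P.potential o o' y ≤ P.R y := by
  refine Finset.sup_le fun x hx => ?_
  simp only [Finset.mem_filter, Finset.mem_univ, true_and] at hx
  obtain ⟨hxout, hyx⟩ := hx
  by_contra hlt
  simp only [threshold, not_le, lt_min_iff] at hlt
  have hne : y ≠ x := by
    rintro rfl
    exact hy.ne' (h.smallIn_eq_zero_of_smallOut_pos hI hxout)
  have hH : ∀ g ∈ ({g ∈ P.smallTransfers o o' | o g = x} : Finset M),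
      g ∈ alloc o x ∧ P.u x g = P.b x := fun g hg => by
    simp only [smallTransfers, Finset.mem_filter] at hg
    exact ⟨mem_alloc.mpr hg.2, hg.2 ▸ P.not_isLarge_iff.mp hg.1.2⟩
  by_cases hlarge : ∃ g ∈ ({g ∈ P.smallTransfers o o' | o g = x} : Finset M), P.IsLarge y g
  · obtain ⟨g, hg, hgy⟩ := hlarge
    exact hI (typeIWitness_of_reaches_back hyx hne (hH g hg).1 (hH g hg).2 hgy (P.b_lt_a x).ne')
  · push Not at hlarge
    refine hII (typeIIWitness_of_reaches hyx hne (zero_lt_one.trans (P.one_lt_R y)) (P.ratio_eq y)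
      (by rw [P.ratio_eq, P.ratio_eq]; exact_mod_cast hlt.1) (by unfold smallOut at hlt; omega)
      fun g hg => ⟨(hH g hg).1, (hH g hg).2, P.not_isLarge_iff.mp (hlarge g hg)⟩)

theorem R_sub_potential_mul_largeNet_le (h : P.IsMinimalImprovement o o')
    (hI : ¬TypeIWitness P.u P.a P.b (alloc o)) (hII : ¬TypeIIWitness P.u P.a P.b (alloc o))
    (v : Fin n) :
    ((P.R v : ℤ) - P.potential o o' v) * P.largeNet o o' v ≤ P.gain o o' v ∧
      (0 < P.gain o o' v →
        ((P.R v : ℤ) - P.potential o o' v) * P.largeNet o o' v < P.gain o o' v) := by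
  have hgain := h.gain_eq hI v
  by_cases hout : 0 < P.smallOut o o' v
  · rw [h.smallIn_eq_zero_of_smallOut_pos hI hout] at hgain
    have hnL := h.largeNet_pos_of_smallOut_pos hI hout
    have hθ : (P.threshold o o' v : ℤ) ≤ P.potential o o' v := by
      exact_mod_cast threshold_le_potential hout
    have hmono : ((P.R v : ℤ) - P.potential o o' v) * P.largeNet o o' v ≤
        ((P.R v : ℤ) - P.threshold o o' v) * P.largeNet o o' v :=
      mul_le_mul_of_nonneg_right (by omega) hnL.le
    have := h.gain_nonneg v
    rcases min_choice (P.R v) (P.smallOut o o' v + 1) with hmin | hmin <;>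
      simp only [threshold, hmin] at hmono <;> push_cast at hmono <;> constructor <;> intros <;>
      nlinarith
  · by_cases hin : 0 < P.smallIn o o' v
    · have := mul_nonpos_of_nonneg_of_nonpos
        (sub_nonneg.mpr (by exact_mod_cast h.potential_le_R_of_smallIn_pos hI hII hin :
          (P.potential o o' v : ℤ) ≤ P.R v)) (h.largeNet_nonpos_of_smallIn_pos hI hin)
      rw [h.gain_eq_zero_of_smallIn_pos hI hin]
      exact ⟨this, fun h0 => absurd h0 (lt_irrefl 0)⟩
    · have hnL := h.largeNet_eq_zero_of_smallOut_eq_zero (v := v) hI (by omega) (by omega)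
      rw [hnL] at hgain ⊢
      constructor <;> intros <;> omega

theorem false_of_not_witness (h : P.IsMinimalImprovement o o')
    (hI : ¬TypeIWitness P.u P.a P.b (alloc o)) (hII : ¬TypeIIWitness P.u P.a P.b (alloc o)) :
    False := by
  have hkey := h.R_sub_potential_mul_largeNet_le hI hII
  have hpot : ∑ v, (P.potential o o' v : ℤ) * P.largeNet o o' v ≤ 0 := by
    rw [sum_mul_largeNet]
    refine Finset.sum_nonpos fun g hg => ?_
    obtain ⟨hgE, hl⟩ := Finset.mem_filter.mp hg
    have := potential_le_of_largeLink (o' := o')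
      ⟨g, mem_alloc.mpr rfl, hl, h.isLarge_of_isLarge hgE hl⟩
    omega
  have hR : ∑ v, (P.R v : ℤ) * P.largeNet o o' v = ∑ v, P.gain o o' v := by
    simp only [h.gain_eq hI, Finset.sum_sub_distrib, Finset.sum_add_distrib,
      sum_smallIn_eq_sum_smallOut]
    ring
  obtain ⟨j, hj⟩ := h.exists_gain_pos
  have hlt := Finset.sum_lt_sum (fun v _ => (hkey v).1) ⟨j, Finset.mem_univ _, (hkey j).2 hj⟩
  simp only [sub_mul, Finset.sum_sub_distrib] at hlt
  linarith

end IntRatioProfile.IsMinimalImprovement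

/-- In a personalized bi-valued instance in which every ratio
`rᵢ = aᵢ / bᵢ` is a positive integer, any Pareto-dominated allocation admits a
Type I witness or a Type II witness. -/
theorem pareto_dominated_implies_witness
    (n : ℕ) (M : Type*) [Fintype M] [DecidableEq M]
    (u : Fin n → M → ℝ) (a b : Fin n → ℝ)
    (hab : ∀ i, b i < a i) (hb : ∀ i, 0 < b i)
    (hbi : ∀ i g, u i g = a i ∨ u i g = b i)
    (hint : ∀ i, ∃ R : ℕ, 0 < R ∧ a i / b i = (R : ℝ))
    (X : Fin n → Finset M) (hX : IsAllocation X)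
    (hdom : ∃ X' : Fin n → Finset M, IsAllocation X' ∧ ParetoDominates u X' X) :
    TypeIWitness u a b X ∨ TypeIIWitness u a b X := by
  choose R _ hR using hint
  let P : IntRatioProfile n M :=
    { u, a, b, R
      b_pos := hb
      one_lt_R := fun i => by
        have : (1 : ℝ) < R i := by rw [← hR i, one_lt_div (hb i)]; exact hab i
        exact_mod_cast this
      a_eq := fun i => by rw [← hR i, div_mul_cancel₀ _ (hb i).ne']
      u_eq_or := hbi }
  obtain ⟨o, rfl⟩ := hX.exists_eq_alloc
  obtain ⟨X', hX', hdom⟩ := hdom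
  obtain ⟨o', rfl⟩ := hX'.exists_eq_alloc
  obtain ⟨o'', hmin⟩ := P.exists_isMinimalImprovement (P.dominates_of_paretoDominates hdom)
  by_contra hw
  push Not at hw
  exact hmin.false_of_not_witness hw.1 hw.2
end

section
/- If an allocation X of a personalized bi-valued instance admits a Type I witness (a_1,…,a_k; g_1,…,g_k), then the allocation obtained from X by transferring g_t from agent a_t to agent a_{t+1} for each 1 ≤ t ≤ k−1 and transferring g_k from agent a_k to agent a_1 Pareto-dominates X; in particular, X is not Pareto-optimal. -/
open Finset

/-- If an allocation `X` of a personalized bi-valued instance admits a Type I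
witness `(ag 0, …, ag (k-1); g 0, …, g (k-1))` (0-indexed), then the allocation `X'`
obtained from `X` by transferring `g t` from agent `ag t` to agent `ag (t+1)` for each
`t ≤ k-2` and transferring `g (k-1)` from agent `ag (k-1)` to agent `ag 0` (so that agent
`ag s` receives the good `g ((s + (k-1)) % k)` and gives away the good `g s`)
Pareto-dominates `X`; in particular, `X` is not Pareto-optimal. -/
theorem typeI_witness_gives_pareto_improvement
    (n : ℕ) (M : Type*) [Fintype M] [DecidableEq M]
    (u : Fin n → M → ℝ) (a b : Fin n → ℝ)
    (hab : ∀ i, b i < a i) (hb : ∀ i, 0 < b i)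
    (hbi : ∀ i g, u i g = a i ∨ u i g = b i)
    (X : Fin n → Finset M) (hX : IsAllocation X)
    -- the Type I witness:
    (k : ℕ) (ag : ℕ → Fin n) (g : ℕ → M)
    (hk : 2 ≤ k)
    (hdist : ∀ s, s < k → ∀ t, t < k → s ≠ t → ag s ≠ ag t)
    (hmem : ∀ t, t < k → g t ∈ X (ag t))
    (hSL₁ : u (ag 0) (g 0) = b (ag 0)) (hSL₂ : u (ag 1) (g 0) = a (ag 1))
    (hLL : ∀ t, 1 ≤ t → t ≤ k - 2 →
      u (ag t) (g t) = a (ag t) ∧ u (ag (t + 1)) (g t) = a (ag (t + 1)))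
    (hlast : ¬ (u (ag (k - 1)) (g (k - 1)) = a (ag (k - 1)) ∧
      u (ag 0) (g (k - 1)) = b (ag 0)))
    -- the allocation obtained from X by performing the cyclic transfers:
    (X' : Fin n → Finset M)
    (hX'cyc : ∀ s, s < k →
      X' (ag s) = insert (g ((s + (k - 1)) % k)) ((X (ag s)).erase (g s)))
    (hX'other : ∀ j : Fin n, (∀ s, s < k → ag s ≠ j) → X' j = X j) :
    ParetoDominates u X' X ∧ ¬ IsParetoOptimal u X := by
  classical
  have hk1 : k - 1 < k := by omega
  set P : ℕ → ℕ := fun s => (s + (k - 1)) % k with hPdef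
  have hPlt : ∀ s, P s < k := fun s => Nat.mod_lt _ (by omega)
  have hPformula : ∀ s, s < k → P s = if s = 0 then k - 1 else s - 1 := by
    intro s hs
    by_cases h0 : s = 0
    · simp [hPdef, h0, Nat.mod_eq_of_lt hk1]
    · have he : s + (k - 1) = k + (s - 1) := by omega
      simp only [hPdef, he, Nat.add_mod_left, if_neg h0]
      exact Nat.mod_eq_of_lt (by omega)
  have hPne : ∀ s, s < k → P s ≠ s := by
    intro s hs
    rw [hPformula s hs]
    split_ifs <;> omega
  have hPinj : ∀ s, s < k → ∀ t, t < k → P s = P t → s = t := by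
    intro s hs t ht h
    rw [hPformula s hs, hPformula t ht] at h
    split_ifs at h <;> omega
  have hPsucc : ∀ s, s < k → P ((s + 1) % k) = s := by
    intro s hs
    rcases Nat.lt_or_ge (s + 1) k with h | h
    · rw [Nat.mod_eq_of_lt h, hPformula (s + 1) h, if_neg (by omega)]
      omega
    · have hsk : s = k - 1 := by omega
      subst hsk
      have h1 : k - 1 + 1 = k := by omega
      have h2 : (k - 1 + 1) % k = 0 := by simp [h1]
      rw [h2, hPformula 0 (by omega), if_pos rfl]
  have hgdist : ∀ p, p < k → ∀ q, q < k → p ≠ q → g p ≠ g q := by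
    intro p hp q hq hpq he
    have hd := hX.2 (ag p) (ag q) (hdist p hp q hq hpq)
    exact (Finset.disjoint_left.mp hd (hmem p hp)) (he ▸ hmem q hq)
  have hnotin : ∀ s, s < k → g (P s) ∉ (X (ag s)).erase (g s) := by
    intro s hs hm
    have hx : g (P s) ∈ X (ag s) := Finset.mem_of_mem_erase hm
    exact (Finset.disjoint_left.mp
      (hX.2 (ag (P s)) (ag s) (hdist _ (hPlt s) _ hs (hPne s hs)))
      (hmem _ (hPlt s))) hx
  have hX'mem : ∀ s, s < k → ∀ x, x ∈ X' (ag s) ↔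
      x = g (P s) ∨ (x ∈ X (ag s) ∧ x ≠ g s) := by
    intro s hs x
    rw [hX'cyc s hs]
    simp only [Finset.mem_insert, Finset.mem_erase]
    tauto
  have hutil : ∀ s, s < k → ∀ i : Fin n,
      util u i (X' (ag s)) = u i (g (P s)) + util u i (X (ag s)) - u i (g s) := by
    intro s hs i
    rw [hX'cyc s hs]
    unfold util
    rw [Finset.sum_insert (hnotin s hs)]
    have h := Finset.sum_erase_add (X (ag s)) (u i) (hmem s hs)
    linarith
  have hrecvA : ∀ s, 1 ≤ s → s < k → u (ag s) (g (s - 1)) = a (ag s) := by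
    intro s h1 hs
    rcases Nat.lt_or_ge s 2 with h2 | h2
    · have hs1 : s = 1 := by omega
      subst hs1
      simpa using hSL₂
    · have h := (hLL (s - 1) (by omega) (by omega)).2
      have e : s - 1 + 1 = s := by omega
      rwa [e] at h
  have hkey : ∀ s, s < k → u (ag s) (g s) ≤ u (ag s) (g (P s)) := by
    intro s hs
    rcases Nat.eq_zero_or_pos s with h0 | hpos
    · subst h0
      rw [hPformula 0 hs, if_pos rfl, hSL₁]
      rcases hbi (ag 0) (g (k - 1)) with h | h <;> rw [h]
      exact le_of_lt (hab _)
    · rw [hPformula s hs, if_neg (by omega), hrecvA s hpos hs]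
      rcases hbi (ag s) (g s) with h | h <;> rw [h]
      exact le_of_lt (hab _)
  have hge : ∀ i, util u i (X i) ≤ util u i (X' i) := by
    intro i
    by_cases hc : ∃ s, s < k ∧ ag s = i
    · obtain ⟨s, hs, rfl⟩ := hc
      rw [hutil s hs]
      linarith [hkey s hs]
    · push_neg at hc
      rw [hX'other i hc]
  have hstrict : ∃ j, util u j (X j) < util u j (X' j) := by
    rcases hbi (ag (k - 1)) (g (k - 1)) with hA | hB
    · have h0 : u (ag 0) (g (k - 1)) = a (ag 0) := by
        rcases hbi (ag 0) (g (k - 1)) with h | h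
        · exact h
        · exact absurd ⟨hA, h⟩ hlast
      refine ⟨ag 0, ?_⟩
      rw [hutil 0 (by omega), hPformula 0 (by omega), if_pos rfl, h0, hSL₁]
      linarith [hab (ag 0)]
    · refine ⟨ag (k - 1), ?_⟩
      rw [hutil (k - 1) hk1, hPformula (k - 1) hk1, if_neg (by omega),
        hrecvA (k - 1) (by omega) hk1, hB]
      linarith [hab (ag (k - 1))]
  have hPD : ParetoDominates u X' X := ⟨hge, hstrict⟩
  have hX'alloc : IsAllocation X' := by
    constructor
    · intro x
      obtain ⟨i, hi⟩ := hX.1 x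
      by_cases hc : ∃ s, s < k ∧ ag s = i
      · obtain ⟨s, hs, rfl⟩ := hc
        by_cases hgs : x = g s
        · have hlt : (s + 1) % k < k := Nat.mod_lt _ (by omega)
          refine ⟨ag ((s + 1) % k), (hX'mem _ hlt x).mpr (Or.inl ?_)⟩
          rw [hPsucc s hs]
          exact hgs
        · exact ⟨ag s, (hX'mem s hs x).mpr (Or.inr ⟨hi, hgs⟩)⟩
      · push_neg at hc
        exact ⟨i, by rw [hX'other i hc]; exact hi⟩
    · intro i j hij
      rw [Finset.disjoint_left]
      intro x hxi hxj
      by_cases hci : ∃ s, s < k ∧ ag s = i <;> by_cases hcj : ∃ t, t < k ∧ ag t = j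
      · obtain ⟨s, hs, rfl⟩ := hci
        obtain ⟨t, ht, rfl⟩ := hcj
        have hst : s ≠ t := fun h => hij (by rw [h])
        rcases (hX'mem s hs x).mp hxi with h1 | ⟨h1, h1'⟩ <;>
          rcases (hX'mem t ht x).mp hxj with h2 | ⟨h2, h2'⟩
        · have hne : P s ≠ P t := fun h => hst (hPinj s hs t ht h)
          exact hgdist _ (hPlt s) _ (hPlt t) hne (h1 ▸ h2)
        · by_cases hpt : P s = t
          · exact h2' (by rw [h1, hpt])
          · exact (Finset.disjoint_left.mp
              (hX.2 (ag (P s)) (ag t) (hdist _ (hPlt s) _ ht hpt))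
              (hmem _ (hPlt s))) (h1 ▸ h2)
        · by_cases hpt : P t = s
          · exact h1' (by rw [h2, hpt])
          · exact (Finset.disjoint_left.mp
              (hX.2 (ag (P t)) (ag s) (hdist _ (hPlt t) _ hs hpt))
              (hmem _ (hPlt t))) (h2 ▸ h1)
        · exact (Finset.disjoint_left.mp (hX.2 _ _ hij) h1) h2
      · obtain ⟨s, hs, rfl⟩ := hci
        push_neg at hcj
        rw [hX'other j hcj] at hxj
        rcases (hX'mem s hs x).mp hxi with h1 | ⟨h1, _⟩
        · exact (Finset.disjoint_left.mp
            (hX.2 (ag (P s)) j (hcj _ (hPlt s)))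
            (hmem _ (hPlt s))) (h1 ▸ hxj)
        · exact (Finset.disjoint_left.mp (hX.2 _ _ hij) h1) hxj
      · obtain ⟨t, ht, rfl⟩ := hcj
        push_neg at hci
        rw [hX'other i hci] at hxi
        rcases (hX'mem t ht x).mp hxj with h2 | ⟨h2, _⟩
        · exact (Finset.disjoint_left.mp
            (hX.2 (ag (P t)) i (hci _ (hPlt t)))
            (hmem _ (hPlt t))) (h2 ▸ hxi)
        · exact (Finset.disjoint_left.mp (hX.2 _ _ hij.symm) h2) hxi
      · push_neg at hci
        push_neg at hcj
        rw [hX'other i hci] at hxi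
        rw [hX'other j hcj] at hxj
        exact (Finset.disjoint_left.mp (hX.2 _ _ hij) hxi) hxj
  exact ⟨hPD, fun h => h ⟨X', hX'alloc, hPD⟩⟩
end

section
/- If an allocation X of a personalized bi-valued instance admits a Type II witness (a_1,…,a_k; h_1,…,h_{r_{a_1}}; g_1,…,g_{k−1}), then the allocation obtained from X by transferring the goods h_1,…,h_{r_{a_1}} from agent a_k to agent a_1 and transferring g_t from agent a_t to agent a_{t+1} for each 1 ≤ t ≤ k−1 Pareto-dominates X; in particular, X is not Pareto-optimal. -/
open Finset

/-- If an allocation `X` of a personalized bi-valued instance admits a Type II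
witness `(ag 0, …, ag (k-1); h 0, …, h (R-1); g 0, …, g (k-2))` (0-indexed, where
`R = r (ag 0)` is a positive integer), then the allocation `X'` obtained from `X` by
transferring the goods `h 0, …, h (R-1)` from agent `ag (k-1)` to agent `ag 0` and
transferring `g t` from agent `ag t` to agent `ag (t+1)` for each `t ≤ k-2`
Pareto-dominates `X`; in particular, `X` is not Pareto-optimal. -/
theorem typeII_witness_gives_pareto_improvement
    (n : ℕ) (M : Type*) [Fintype M] [DecidableEq M]
    (u : Fin n → M → ℝ) (a b : Fin n → ℝ)
    (hab : ∀ i, b i < a i) (hb : ∀ i, 0 < b i)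
    (hbi : ∀ i g, u i g = a i ∨ u i g = b i)
    (X : Fin n → Finset M) (hX : IsAllocation X)
    -- the Type II witness:
    (k R : ℕ) (ag : ℕ → Fin n) (h : ℕ → M) (g : ℕ → M)
    (hk : 2 ≤ k) (hR : 0 < R)
    (hdist : ∀ s, s < k → ∀ t, t < k → s ≠ t → ag s ≠ ag t)
    (hratio : a (ag 0) / b (ag 0) = (R : ℝ))
    (hratio_lt : a (ag 0) / b (ag 0) < a (ag (k - 1)) / b (ag (k - 1)))
    (hhdist : ∀ j, j < R → ∀ j', j' < R → j ≠ j' → h j ≠ h j')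
    (hh : ∀ j, j < R →
      h j ∈ X (ag (k - 1)) ∧ u (ag (k - 1)) (h j) = b (ag (k - 1)) ∧
        u (ag 0) (h j) = b (ag 0))
    (hg : ∀ t, t < k - 1 →
      g t ∈ X (ag t) ∧ u (ag t) (g t) = a (ag t) ∧ u (ag (t + 1)) (g t) = a (ag (t + 1)))
    -- the allocation obtained from X by performing the transfers:
    (X' : Fin n → Finset M)
    (hX'0 : X' (ag 0) = ((X (ag 0)).erase (g 0)) ∪ (Finset.range R).image h)
    (hX'mid : ∀ t, 1 ≤ t → t ≤ k - 2 →
      X' (ag t) = insert (g (t - 1)) ((X (ag t)).erase (g t)))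
    (hX'last : X' (ag (k - 1)) =
      insert (g (k - 2)) (X (ag (k - 1)) \ (Finset.range R).image h))
    (hX'other : ∀ j : Fin n, (∀ s, s < k → ag s ≠ j) → X' j = X j) :
    ParetoDominates u X' X ∧ ¬ IsParetoOptimal u X := by
  obtain ⟨hcov, hdisj⟩ := hX
  have hb0 : (0:ℝ) < b (ag 0) := hb _
  have hbK : (0:ℝ) < b (ag (k-1)) := hb _
  have haR0 : a (ag 0) = (R:ℝ) * b (ag 0) := (div_eq_iff (ne_of_gt hb0)).mp hratio
  have haRK : (R:ℝ) * b (ag (k-1)) < a (ag (k-1)) := by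
    have h2 : (R:ℝ) < a (ag (k-1)) / b (ag (k-1)) := hratio ▸ hratio_lt
    exact (lt_div_iff₀ hbK).mp h2
  have hXd : ∀ {i j : Fin n}, i ≠ j → ∀ {x : M}, x ∈ X i → x ∈ X j → False := by
    intro i j hij x hx hy
    exact Finset.disjoint_left.mp (hdisj _ _ hij) hx hy
  have hgmem : ∀ t, t < k-1 → g t ∈ X (ag t) := fun t ht => (hg t ht).1
  have hhmem : ∀ j, j < R → h j ∈ X (ag (k-1)) := fun j hj => (hh j hj).1
  have hagKne : ∀ t, t < k-1 → ag t ≠ ag (k-1) :=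
    fun t ht => hdist t (by omega) (k-1) (by omega) (by omega)
  have hgne : ∀ t, t < k-1 → ∀ t', t' < k-1 → t ≠ t' → g t ≠ g t' := by
    intro t ht t' ht' htt' he
    exact hXd (hdist t (by omega) t' (by omega) htt') (hgmem t ht) (he ▸ hgmem t' ht')
  have hgh : ∀ t, t < k-1 → ∀ j, j < R → g t ≠ h j := by
    intro t ht j hj he
    exact hXd (hagKne t ht) (hgmem t ht) (he ▸ hhmem j hj)
  set hs : Finset M := (Finset.range R).image h with hhs
  have hmemhs : ∀ x, x ∈ hs ↔ ∃ j, j < R ∧ h j = x := by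
    intro x
    simp [hhs, Finset.mem_image, Finset.mem_range]
  have hhsub : hs ⊆ X (ag (k-1)) := by
    intro x hx
    obtain ⟨j, hj, rfl⟩ := (hmemhs x).mp hx
    exact hhmem j hj
  -- sum over hs
  have hsumhs : ∀ i : Fin n, (∀ j, j < R → u i (h j) = b i) → util u i hs = R * b i := by
    intro i hval
    have hinj : ∀ x ∈ Finset.range R, ∀ y ∈ Finset.range R, h x = h y → x = y := by
      intro x hx y hy he
      by_contra hne
      exact hhdist x (Finset.mem_range.mp hx) y (Finset.mem_range.mp hy) hne he
    rw [util, hhs, Finset.sum_image hinj,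
      Finset.sum_congr rfl (fun j hj => hval j (Finset.mem_range.mp hj))]
    simp [Finset.sum_const, Finset.card_range, nsmul_eq_mul]
  -- membership characterization of X'
  have hmemX' : ∀ (i : Fin n), ∀ x ∈ X' i,
      (∃ t, t < k-1 ∧ x = g t ∧ i = ag (t+1)) ∨
      (∃ j, j < R ∧ x = h j ∧ i = ag 0) ∨
      (x ∈ X i ∧ (∀ t, t < k-1 → x ≠ g t) ∧ ∀ j, j < R → x ≠ h j) := by
    intro i x hx
    by_cases hex : ∃ s, s < k ∧ ag s = i
    · obtain ⟨s, hsk, rfl⟩ := hex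
      rcases Nat.eq_zero_or_pos s with rfl | hs1
      · rw [hX'0] at hx
        rcases Finset.mem_union.mp hx with hx | hx
        · refine Or.inr (Or.inr ⟨Finset.mem_of_mem_erase hx, ?_, ?_⟩)
          · intro t ht he
            rcases Nat.eq_zero_or_pos t with rfl | ht1
            · exact Finset.ne_of_mem_erase hx he
            · exact hXd (hdist t (by omega) 0 (by omega) (by omega))
                (hgmem t ht) (he ▸ Finset.mem_of_mem_erase hx)
          · intro j hj he
            exact hXd (hagKne 0 (by omega)).symm (hhmem j hj)
              (he ▸ Finset.mem_of_mem_erase hx)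
        · obtain ⟨j, hj, rfl⟩ := (hmemhs x).mp hx
          exact Or.inr (Or.inl ⟨j, hj, rfl, rfl⟩)
      · by_cases hsl : s = k - 1
        · subst hsl
          rw [hX'last] at hx
          rcases Finset.mem_insert.mp hx with rfl | hx
          · left
            refine ⟨k-2, by omega, rfl, ?_⟩
            congr 1
            omega
          · obtain ⟨hx1, hx2⟩ := Finset.mem_sdiff.mp hx
            refine Or.inr (Or.inr ⟨hx1, ?_, ?_⟩)
            · intro t ht he
              exact hXd (hagKne t ht).symm hx1 (he ▸ hgmem t ht)
            · intro j hj he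
              exact hx2 ((hmemhs x).mpr ⟨j, hj, he.symm⟩)
        · have hsm : 1 ≤ s ∧ s ≤ k - 2 := by omega
          rw [hX'mid s hsm.1 hsm.2] at hx
          rcases Finset.mem_insert.mp hx with rfl | hx
          · left
            refine ⟨s-1, by omega, rfl, ?_⟩
            congr 1
            omega
          · refine Or.inr (Or.inr ⟨Finset.mem_of_mem_erase hx, ?_, ?_⟩)
            · intro t ht he
              by_cases hts : t = s
              · exact Finset.ne_of_mem_erase hx (hts ▸ he)
              · exact hXd (hdist t (by omega) s (by omega) hts)
                  (hgmem t ht) (he ▸ Finset.mem_of_mem_erase hx)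
            · intro j hj he
              exact hXd (hagKne s (by omega)).symm (hhmem j hj)
                (he ▸ Finset.mem_of_mem_erase hx)
    · push_neg at hex
      rw [hX'other i (fun s hsk => hex s hsk)] at hx
      refine Or.inr (Or.inr ⟨hx, ?_, ?_⟩)
      · intro t ht he
        exact hXd (hex t (by omega)) (hgmem t ht) (he ▸ hx)
      · intro j hj he
        exact hXd (hex (k-1) (by omega)) (hhmem j hj) (he ▸ hx)
  -- X' is an allocation
  have hallocX' : IsAllocation X' := by
    constructor
    · intro x
      obtain ⟨i, hxi⟩ := hcov x
      by_cases hex : ∃ s, s < k ∧ ag s = i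
      · obtain ⟨s, hsk, rfl⟩ := hex
        by_cases hmoveg : ∃ t, t < k - 1 ∧ x = g t ∧ ag t = ag s
        · obtain ⟨t, ht, rfl, hts⟩ := hmoveg
          by_cases htl : t + 1 = k - 1
          · refine ⟨ag (k-1), ?_⟩
            rw [hX'last]
            have he : g (k-2) = g t := by congr 1; omega
            rw [he]
            exact Finset.mem_insert_self _ _
          · refine ⟨ag (t+1), ?_⟩
            rw [hX'mid (t+1) (by omega) (by omega)]
            have he : g (t+1-1) = g t := by congr 1
            rw [he]
            exact Finset.mem_insert_self _ _
        · push_neg at hmoveg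
          by_cases hsl : s = k - 1
          · subst hsl
            by_cases hxhs : x ∈ hs
            · exact ⟨ag 0, by rw [hX'0]; exact Finset.mem_union_right _ hxhs⟩
            · refine ⟨ag (k-1), ?_⟩
              rw [hX'last]
              exact Finset.mem_insert_of_mem (Finset.mem_sdiff.mpr ⟨hxi, hxhs⟩)
          · have hxg : x ≠ g s := by
              intro he
              exact hmoveg s (by omega) he rfl
            rcases Nat.eq_zero_or_pos s with rfl | hs1
            · refine ⟨ag 0, ?_⟩
              rw [hX'0]
              exact Finset.mem_union_left _ (Finset.mem_erase.mpr ⟨hxg, hxi⟩)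
            · refine ⟨ag s, ?_⟩
              rw [hX'mid s hs1 (by omega)]
              exact Finset.mem_insert_of_mem (Finset.mem_erase.mpr ⟨hxg, hxi⟩)
      · push_neg at hex
        exact ⟨i, by rw [hX'other i hex]; exact hxi⟩
    · intro i j hij
      rw [Finset.disjoint_left]
      intro x hxi hxj
      rcases hmemX' i x hxi with ⟨t, ht, rfl, rfl⟩ | ⟨jj, hjj, rfl, rfl⟩ | ⟨hxi', hng, hnh⟩
      · rcases hmemX' j _ hxj with ⟨t', ht', he, rfl⟩ | ⟨jj', hjj', he, rfl⟩ | ⟨_, hng, _⟩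
        · have het : t = t' := by
            by_contra hne
            exact hgne t ht t' ht' hne he
          exact hij (by rw [het])
        · exact hgh t ht jj' hjj' he
        · exact hng t ht rfl
      · rcases hmemX' j _ hxj with ⟨t', ht', he, rfl⟩ | ⟨jj', hjj', he, rfl⟩ | ⟨_, _, hnh⟩
        · exact hgh t' ht' jj hjj he.symm
        · exact hij rfl
        · exact hnh jj hjj rfl
      · rcases hmemX' j x hxj with ⟨t', ht', rfl, rfl⟩ | ⟨jj', hjj', rfl, rfl⟩ | ⟨hxj', h1, h2⟩
        · exact hng t' ht' rfl
        · exact hnh jj' hjj' rfl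
        · exact hXd hij hxi' hxj'
  -- utility computations
  have hutil0 : util u (ag 0) (X' (ag 0)) = util u (ag 0) (X (ag 0)) := by
    have hg0 : g 0 ∈ X (ag 0) := hgmem 0 (by omega)
    have hdisj0 : Disjoint ((X (ag 0)).erase (g 0)) hs := by
      rw [Finset.disjoint_left]
      intro x hx hxs
      exact hXd (hagKne 0 (by omega)) (Finset.mem_of_mem_erase hx) (hhsub hxs)
    have e1 : ∑ x ∈ (X (ag 0)).erase (g 0), u (ag 0) x + u (ag 0) (g 0)
        = ∑ x ∈ X (ag 0), u (ag 0) x := Finset.sum_erase_add _ _ hg0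
    have e2 : util u (ag 0) hs = R * b (ag 0) := hsumhs _ (fun j hj => (hh j hj).2.2)
    have e3 : u (ag 0) (g 0) = a (ag 0) := (hg 0 (by omega)).2.1
    rw [util] at e2
    rw [e3] at e1
    simp only [util]
    rw [hX'0, Finset.sum_union hdisj0, e2]
    linarith
  have hutilmid : ∀ s, 1 ≤ s → s ≤ k - 2 →
      util u (ag s) (X' (ag s)) = util u (ag s) (X (ag s)) := by
    intro s hs1 hs2
    have hgs : g s ∈ X (ag s) := hgmem s (by omega)
    have hgprev : g (s-1) ∉ (X (ag s)).erase (g s) := by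
      intro hmem
      exact hXd (hdist (s-1) (by omega) s (by omega) (by omega))
        (hgmem (s-1) (by omega)) (Finset.mem_of_mem_erase hmem)
    have e1 : ∑ x ∈ (X (ag s)).erase (g s), u (ag s) x + u (ag s) (g s)
        = ∑ x ∈ X (ag s), u (ag s) x := Finset.sum_erase_add _ _ hgs
    have e2 : u (ag s) (g s) = a (ag s) := (hg s (by omega)).2.1
    have e3 : u (ag s) (g (s-1)) = a (ag s) := by
      have h4 := (hg (s-1) (by omega)).2.2
      have hss : s - 1 + 1 = s := by omega
      rwa [hss] at h4
    rw [hX'mid s hs1 hs2, util, Finset.sum_insert hgprev, e3, util]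
    rw [e2] at e1
    linarith
  have hutillast : util u (ag (k-1)) (X (ag (k-1))) < util u (ag (k-1)) (X' (ag (k-1))) := by
    have hgk : g (k-2) ∉ X (ag (k-1)) \ hs := by
      intro hmem
      exact hXd (hagKne (k-2) (by omega)) (hgmem (k-2) (by omega))
        (Finset.mem_sdiff.mp hmem).1
    have e1 : ∑ x ∈ X (ag (k-1)) \ hs, u (ag (k-1)) x + ∑ x ∈ hs, u (ag (k-1)) x
        = ∑ x ∈ X (ag (k-1)), u (ag (k-1)) x := Finset.sum_sdiff hhsub
    have e2 : util u (ag (k-1)) hs = R * b (ag (k-1)) :=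
      hsumhs _ (fun j hj => (hh j hj).2.1)
    have e3 : u (ag (k-1)) (g (k-2)) = a (ag (k-1)) := by
      have h4 := (hg (k-2) (by omega)).2.2
      have hss : k - 2 + 1 = k - 1 := by omega
      rwa [hss] at h4
    rw [util] at e2
    rw [e2] at e1
    simp only [util]
    rw [hX'last, Finset.sum_insert hgk, e3]
    linarith
  have hdom : ParetoDominates u X' X := by
    constructor
    · intro i
      by_cases hex : ∃ s, s < k ∧ ag s = i
      · obtain ⟨s, hsk, rfl⟩ := hex
        rcases Nat.eq_zero_or_pos s with rfl | hs1
        · exact le_of_eq hutil0.symm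
        · by_cases hsl : s = k - 1
          · subst hsl
            exact le_of_lt hutillast
          · exact le_of_eq (hutilmid s hs1 (by omega)).symm
      · push_neg at hex
        rw [hX'other i hex]
    · exact ⟨ag (k-1), hutillast⟩
  exact ⟨hdom, fun hpo => hpo ⟨X', hallocX', hdom⟩⟩
end

section
/- Let X be an allocation of a personalized bi-valued instance in which every ratio r_i = a_i/b_i is a positive integer. Then X is Pareto-optimal if and only if X admits neither a Type I witness nor a Type II witness. -/
open Finset

/-!
A Type I or Type II witness describes a cyclic exchange of bundles after which nobody is worse off
and one agent is better off.

Conversely, measure utilities in units of `b i`, so that a good weighs `R i` or `1`, and take a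
Pareto-improvement moving as few goods as possible. By minimality no moved good can be returned, no
two can be swapped and no cycle of them undone; with no Type I witness this makes every moved good
large for both or small for both of its old and new owner. Let the potential of an agent be the
least ratio `R s` over the agents `s` from which a path of moved large goods leads to it: it does
not increase along moved large goods, and with no Type II witness an agent whose potential is below
its ratio owns fewer small goods than its potential. Valuing a large good at the potential of the
agent holding it and a small good at `1`, every agent gives away no more value than it receives,
and strictly less if it gains; but no moved good gains value on its way.
-/

open Function

section

variable {n : ℕ} {M : Type*}

lemma exists_permute_bundles {ι : Type*} {c : ι → Fin n} {P : ι → Finset M} {σ : M → Fin n}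
    (hc : Injective c) (hσ : ∀ t, ∀ g ∈ P t, σ g = c t) (e : Equiv.Perm ι) :
    ∃ τ : M → Fin n, (∀ t, ∀ g ∈ P t, τ g = c (e t)) ∧ ∀ g, (∀ t, g ∉ P t) → τ g = σ g := by
  classical
  refine ⟨fun g => if h : ∃ t, g ∈ P t then c (e h.choose) else σ g, fun t g hg => ?_,
    fun g hg => dif_neg fun ⟨t, ht⟩ => hg t ht⟩
  have h : ∃ t, g ∈ P t := ⟨t, hg⟩
  simp only [dif_pos h, hc (hσ _ g h.choose_spec ▸ hσ t g hg : c h.choose = c t)]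

section Fintype

variable [Fintype M]

def bundleOf (σ : M → Fin n) (i : Fin n) : Finset M := univ.filter (σ · = i)

@[simp] lemma mem_bundleOf {σ : M → Fin n} {i : Fin n} {g : M} : g ∈ bundleOf σ i ↔ σ g = i := by
  simp [bundleOf]

lemma isAllocation_bundleOf [DecidableEq M] (σ : M → Fin n) : IsAllocation (bundleOf σ) :=
  ⟨fun g => ⟨σ g, mem_bundleOf.2 rfl⟩, fun _ _ hij => disjoint_left.2 fun _ hi hj =>
    hij ((mem_bundleOf.1 hi).symm.trans (mem_bundleOf.1 hj))⟩

lemma IsAllocation.exists_eq_bundleOf [DecidableEq M] {X : Fin n → Finset M}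
    (hX : IsAllocation X) : ∃ σ : M → Fin n, X = bundleOf σ := by
  choose σ hσ using hX.1
  refine ⟨σ, funext fun i => ext fun g => ⟨fun hg => ?_, fun hg => mem_bundleOf.1 hg ▸ hσ g⟩⟩
  rw [mem_bundleOf]
  by_contra hne
  exact disjoint_left.1 (hX.2 _ _ hne) (hσ g) hg

lemma sum_bundleOf_add_sum_filter {β : Type*} [AddCommMonoid β] {σ τ : M → Fin n}
    {D : Finset M} (hD : ∀ g ∉ D, σ g = τ g) (v : M → β) (i : Fin n) :
    ∑ g ∈ bundleOf τ i, v g + ∑ g ∈ D with σ g = i, v g =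
      ∑ g ∈ bundleOf σ i, v g + ∑ g ∈ D with τ g = i, v g := by
  classical
  have hsplit : ∀ ρ : M → Fin n, ∑ g ∈ bundleOf ρ i, v g =
      ∑ g ∈ bundleOf ρ i with g ∉ D, v g + ∑ g ∈ D with ρ g = i, v g := by
    intro ρ
    rw [← sum_filter_not_add_sum_filter _ (· ∈ D)]
    congr 2
    ext g; simp [bundleOf, and_comm]
  have hrest : {g ∈ bundleOf τ i | g ∉ D} = {g ∈ bundleOf σ i | g ∉ D} := by
    ext g
    by_cases hg : g ∈ D <;> simp [hg, hD g]
  rw [hsplit τ, hsplit σ, hrest]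
  abel

section Permute

variable {β : Type*} [AddCommMonoid β] {ι : Type*} {c : ι → Fin n} {P : ι → Finset M}
  {σ τ : M → Fin n} {e : Equiv.Perm ι}

lemma sum_bundleOf_permute (hc : Injective c) (hσ : ∀ t, ∀ g ∈ P t, σ g = c t)
    (hτ : ∀ t, ∀ g ∈ P t, τ g = c (e t)) (hout : ∀ g, (∀ t, g ∉ P t) → τ g = σ g)
    (v : M → β) (s : ι) :
    ∑ g ∈ bundleOf τ (c s), v g + ∑ g ∈ P s, v g =
      ∑ g ∈ bundleOf σ (c s), v g + ∑ g ∈ P (e.symm s), v g := by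
  classical
  have key := sum_bundleOf_add_sum_filter (D := {g | ∃ t, g ∈ P t})
    (fun g hg => (hout g fun t ht => by simp_all).symm) v (c s)
  convert key using 3 <;> ext g <;> simp only [mem_filter, mem_univ, true_and]
  · refine ⟨fun hg => ⟨⟨s, hg⟩, hσ s g hg⟩, fun ⟨⟨t, ht⟩, hgs⟩ => ?_⟩
    rwa [← hc ((hσ t g ht).symm.trans hgs)]
  · refine ⟨fun hg => ⟨⟨_, hg⟩, by rw [hτ _ g hg, e.apply_symm_apply]⟩, fun ⟨⟨t, ht⟩, hgs⟩ => ?_⟩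
    rwa [← e.eq_symm_apply.2 (hc ((hτ t g ht).symm.trans hgs))]

lemma sum_bundleOf_permute_of_forall_ne (hσ : ∀ t, ∀ g ∈ P t, σ g = c t)
    (hτ : ∀ t, ∀ g ∈ P t, τ g = c (e t)) (hout : ∀ g, (∀ t, g ∉ P t) → τ g = σ g)
    (v : M → β) {i : Fin n} (hi : ∀ t, c t ≠ i) :
    ∑ g ∈ bundleOf τ i, v g = ∑ g ∈ bundleOf σ i, v g := by
  classical
  have key := sum_bundleOf_add_sum_filter (D := {g | ∃ t, g ∈ P t})
    (fun g hg => (hout g fun t ht => by simp_all).symm) v i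
  rwa [filter_false_of_mem, filter_false_of_mem, sum_empty, add_zero, add_zero] at key
  all_goals
    simp only [mem_filter, mem_univ, true_and]
    rintro g ⟨t, ht⟩
  exacts [hτ t g ht ▸ hi _, hσ t g ht ▸ hi _]

end Permute

end Fintype

lemma exists_paretoDominates_of_cyclicExchange [Fintype M] [DecidableEq M] {u : Fin n → M → ℝ}
    {X : Fin n → Finset M} (hX : IsAllocation X) {K : ℕ} [NeZero K] {c : Fin K → Fin n}
    (hc : Injective c) {P : Fin K → Finset M} (hP : ∀ t, P t ⊆ X (c t))
    (hle : ∀ t, util u (c t) (P t) ≤ util u (c t) (P (t - 1)))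
    (hlt : ∃ t, util u (c t) (P t) < util u (c t) (P (t - 1))) :
    ∃ X', IsAllocation X' ∧ ParetoDominates u X' X := by
  obtain ⟨σ, rfl⟩ := hX.exists_eq_bundleOf
  have hσ : ∀ t, ∀ g ∈ P t, σ g = c t := fun t g hg => mem_bundleOf.1 (hP t hg)
  obtain ⟨τ, hτ, hout⟩ := exists_permute_bundles hc hσ (Equiv.addRight 1)
  have hagent : ∀ s, util u (c s) (bundleOf τ (c s)) + util u (c s) (P s) =
      util u (c s) (bundleOf σ (c s)) + util u (c s) (P (s - 1)) := fun s => by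
    simpa [util, sub_eq_add_neg] using sum_bundleOf_permute hc hσ hτ hout (u (c s)) s
  refine ⟨bundleOf τ, isAllocation_bundleOf τ, fun i => ?_, ?_⟩
  · by_cases hi : ∃ s, c s = i
    · obtain ⟨s, rfl⟩ := hi
      linarith [hagent s, hle s]
    · push Not at hi
      exact (sum_bundleOf_permute_of_forall_ne hσ hτ hout (u i) hi).ge
  · obtain ⟨s, hs⟩ := hlt
    exact ⟨c s, by linarith [hagent s]⟩

section Bivalued

variable {u : Fin n → M → ℝ} {a b : Fin n → ℝ}

lemma le_large (hab : ∀ i, b i < a i) (hbi : ∀ i g, u i g = a i ∨ u i g = b i) (i : Fin n) (g : M) :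
    u i g ≤ a i := by
  rcases hbi i g with h | h <;> linarith [hab i]

lemma small_le (hab : ∀ i, b i < a i) (hbi : ∀ i g, u i g = a i ∨ u i g = b i) (i : Fin n) (g : M) :
    b i ≤ u i g := by
  rcases hbi i g with h | h <;> linarith [hab i]

variable [DecidableEq M]

lemma util_singleton (i : Fin n) (g : M) : util u i {g} = u i g := sum_singleton _ _

variable [Fintype M]

lemma TypeIWitness.exists_paretoDominates (hab : ∀ i, b i < a i)
    (hbi : ∀ i g, u i g = a i ∨ u i g = b i) {X : Fin n → Finset M} (hX : IsAllocation X)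
    (hW : TypeIWitness u a b X) : ∃ X', IsAllocation X' ∧ ParetoDominates u X' X := by
  obtain ⟨k, ag, g, hk, hinj, hmem, hg0s, hg0l, hmid, hlast⟩ := hW
  obtain ⟨K, rfl⟩ : ∃ K, k = K + 2 := ⟨k - 2, by omega⟩
  have hprev : ∀ s, 1 ≤ s → s ≤ K + 1 → u (ag s) (g (s - 1)) = a (ag s) := by
    intro s hs1 hs2
    rcases Nat.lt_or_ge s 2 with hs | hs
    · obtain rfl : s = 1 := by omega
      exact hg0l
    · simpa [Nat.sub_add_cancel hs1] using (hmid (s - 1) (by omega) (by omega)).2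
  refine exists_paretoDominates_of_cyclicExchange hX (c := fun t => ag t) (P := fun t => {g t})
    (fun s t hst => Fin.ext (by_contra fun hne => hinj s s.2 t t.2 hne hst))
    (fun t => singleton_subset_iff.2 (hmem t t.2)) (fun t => ?_) ?_
  · simp only [util_singleton]
    by_cases ht : t = 0
    · subst ht
      simpa [hg0s] using small_le hab hbi (ag 0) (g ↑(0 - 1 : Fin (K + 2)))
    · rw [Fin.val_sub_one_of_ne_zero ht, hprev t (Fin.pos_iff_ne_zero.2 ht) (by omega)]
      exact le_large hab hbi _ _
  · simp only [util_singleton]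
    rcases hbi (ag (K + 1)) (g (K + 1)) with hL | hS
    · have h0 : u (ag 0) (g (K + 1)) = a (ag 0) :=
        (hbi _ _).resolve_right fun hS => hlast ⟨by simpa using hL, hS⟩
      exact ⟨0, by simp [hg0s, h0, hab]⟩
    · refine ⟨Fin.last _, ?_⟩
      rw [Fin.val_sub_one_of_ne_zero (Fin.last_pos.ne'), Fin.val_last,
        hprev (K + 1) (by omega) le_rfl, hS]
      exact hab _

lemma TypeIIWitness.exists_paretoDominates (hb : ∀ i, 0 < b i) {X : Fin n → Finset M}
    (hX : IsAllocation X) (hW : TypeIIWitness u a b X) :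
    ∃ X', IsAllocation X' ∧ ParetoDominates u X' X := by
  obtain ⟨k, R, ag, h, g, hk, -, hinj, hR, hlt, hhinj, hH, hg⟩ := hW
  obtain ⟨K, rfl⟩ : ∃ K, k = K + 2 := ⟨k - 2, by omega⟩
  simp only [show K + 2 - 1 = K + 1 from rfl] at hlt hH hg
  set H := (range R).image h
  have hutilH : ∀ i, (∀ j < R, u i (h j) = b i) → util u i H = R * b i := fun i hi => by
    rw [util, sum_image fun j hj j' hj' hjj' => by_contra fun hne =>
      hhinj j (mem_range.1 hj) j' (mem_range.1 hj') hne hjj']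
    simp [sum_congr rfl fun j hj => hi j (mem_range.1 hj)]
  have ha0 : a (ag 0) = R * b (ag 0) := (div_eq_iff (hb _).ne').1 hR
  have hlast : R * b (ag (K + 1)) < a (ag (K + 1)) := (lt_div_iff₀ (hb _)).1 (hR ▸ hlt)
  set P : Fin (K + 2) → Finset M := fun t => if t = Fin.last _ then H else {g t}
  have hP : ∀ t, P t ⊆ X (ag t) := fun t => by
    by_cases ht : t = Fin.last _
    · simpa [P, H, ht, image_subset_iff] using fun j hj => (hH j hj).1
    · simpa [P, ht] using (hg t (Fin.val_lt_last ht)).1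
  have hprev : ∀ t : Fin (K + 2), util u (ag t) (P (t - 1)) = a (ag t) := fun t => by
    by_cases ht : t = 0
    · subst ht
      simp [P, Fin.ext_iff, Fin.coe_neg_one, ha0, hutilH _ fun j hj => (hH j hj).2.2]
    · have hval := Fin.val_sub_one_of_ne_zero ht
      have hne : t - 1 ≠ Fin.last _ := by rw [Ne, Fin.ext_iff, hval, Fin.val_last]; omega
      simp only [P, if_neg hne, util_singleton]
      have h0 : (t : ℕ) ≠ 0 := fun h0 => ht (Fin.ext h0)
      simpa [hval, show (t : ℕ) - 1 + 1 = t by omega] using (hg _ (Fin.val_lt_last hne)).2.2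
  have hcur : ∀ t : Fin (K + 2), t ≠ Fin.last _ → util u (ag t) (P t) = a (ag t) := fun t ht => by
    simp only [P, if_neg ht, util_singleton]
    exact (hg t (Fin.val_lt_last ht)).2.1
  have hlast' : util u (ag (Fin.last (K + 1) : ℕ)) (P (Fin.last _)) < a (ag (K + 1)) := by
    simpa [P, hutilH _ fun j hj => (hH j hj).2.1] using hlast
  refine exists_paretoDominates_of_cyclicExchange hX (c := fun t => ag t) (P := P)
    (fun s t hst => Fin.ext (by_contra fun hne => hinj s s.2 t t.2 hne hst)) hP
    (fun t => ?_) ⟨Fin.last _, (hprev _).symm ▸ hlast'⟩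
  by_cases ht : t = Fin.last _
  · subst ht; exact (hprev _).symm ▸ hlast'.le
  · exact (hcur t ht).trans (hprev t).symm |>.le

end Bivalued

section MinimalImprovement

variable [Fintype M] (w : Fin n → M → ℤ)

def value (σ : M → Fin n) (i : Fin n) : ℤ := ∑ g ∈ bundleOf σ i, w i g

def Improves (σ τ : M → Fin n) : Prop :=
  (∀ i, value w σ i ≤ value w τ i) ∧ ∃ j, value w σ j < value w τ j

def moved (σ τ : M → Fin n) : Finset M := {g | σ g ≠ τ g}

structure IsMinimalImprovement (σ τ : M → Fin n) : Prop where
  improves : Improves w σ τ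
  card_moved_le : ∀ τ', Improves w σ τ' → #(moved σ τ) ≤ #(moved σ τ')

variable {w} {σ τ τ' : M → Fin n}

@[simp] lemma mem_moved {g : M} : g ∈ moved σ τ ↔ σ g ≠ τ g := by simp [moved]

lemma exists_isMinimalImprovement (h : Improves w σ τ) :
    ∃ τ, IsMinimalImprovement w σ τ := by
  classical
  obtain ⟨τ, hτ, hmin⟩ := exists_min_image {τ | Improves w σ τ} (fun τ => #(moved σ τ))
    ⟨τ, mem_filter.2 ⟨mem_univ _, h⟩⟩
  exact ⟨τ, (mem_filter.1 hτ).2, fun τ' h' => hmin τ' (mem_filter.2 ⟨mem_univ _, h'⟩)⟩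

lemma value_add_sum_filter {D : Finset M} (hD : ∀ g ∉ D, σ g = τ g) (i : Fin n) :
    value w τ i + ∑ g ∈ D with σ g = i, w i g = value w σ i + ∑ g ∈ D with τ g = i, w i g :=
  sum_bundleOf_add_sum_filter hD (w i) i

lemma value_add_sum_moved (σ τ : M → Fin n) (i : Fin n) :
    value w τ i + ∑ g ∈ moved σ τ with σ g = i, w i g =
      value w σ i + ∑ g ∈ moved σ τ with τ g = i, w i g :=
  value_add_sum_filter (fun g hg => by simpa using hg) i

lemma moved_ssubset {g : M} (hsub : ∀ x, σ x ≠ τ' x → σ x ≠ τ x) (hg : σ g ≠ τ g)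
    (hg' : σ g = τ' g) : moved σ τ' ⊂ moved σ τ :=
  (ssubset_iff_of_subset fun x hx => mem_moved.2 (hsub x (mem_moved.1 hx))).2
    ⟨g, mem_moved.2 hg, fun h => mem_moved.1 h hg'⟩

namespace IsMinimalImprovement

lemma not_improves (h : IsMinimalImprovement w σ τ) (hsub : moved σ τ' ⊂ moved σ τ) :
    ¬ Improves w σ τ' := fun h' => (card_lt_card hsub).not_ge (h.card_moved_le τ' h')

lemma exists_value_lt (h : IsMinimalImprovement w σ τ) (hsub : moved σ τ' ⊂ moved σ τ) :
    ∃ i, value w τ' i < value w τ i := by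
  by_contra! hle
  obtain ⟨hge, j, hj⟩ := h.improves
  exact h.not_improves hsub ⟨fun i => (hge i).trans (hle i), j, hj.trans_le (hle j)⟩

/-- Otherwise returning `g` to its owner would give an improvement moving fewer goods. -/
lemma gain_lt_weight (h : IsMinimalImprovement w σ τ) (hw : ∀ i g, 0 < w i g) {g : M}
    (hg : g ∈ moved σ τ) : value w τ (τ g) - value w σ (τ g) < w (τ g) g := by
  classical
  rw [mem_moved] at hg
  by_contra! hge
  set τ' := update τ g (σ g)
  have hval : ∀ i, value w τ' i + (if τ g = i then w i g else 0) =
      value w τ i + (if σ g = i then w i g else 0) := fun i => by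
    simpa [sum_filter, τ'] using value_add_sum_filter (σ := τ) (τ := τ') (D := {g})
      (fun x hx => by simp [τ', update_of_ne (notMem_singleton.1 hx)]) i
  have hsub : moved σ τ' ⊂ moved σ τ := moved_ssubset (g := g) (fun x hx => by
    rcases eq_or_ne x g with rfl | hxg
    · exact hg
    · simpa [τ', update_of_ne hxg] using hx) hg (update_self g (σ g) τ).symm
  refine h.not_improves hsub ⟨fun i => ?_, σ g, ?_⟩
  · have hi := hval i
    have hle := h.improves.1 i
    have hwi := hw i g
    split_ifs at hi with h₁ h₂ <;> subst_vars <;> omega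
  · have hi := hval (σ g)
    rw [if_neg hg.symm, if_pos rfl] at hi
    linarith [h.improves.1 (σ g), hw (σ g) g]

lemma exists_moved_eq_target (h : IsMinimalImprovement w σ τ) (hw : ∀ i g, 0 < w i g)
    {g : M} (hg : g ∈ moved σ τ) : ∃ g' ∈ moved σ τ, σ g' = τ g := by
  by_contra! hnone
  have hval := value_add_sum_moved (w := w) σ τ (τ g)
  rw [filter_false_of_mem fun x hx => hnone x hx, sum_empty, add_zero] at hval
  have hle : w (τ g) g ≤ ∑ x ∈ moved σ τ with τ x = τ g, w (τ g) x :=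
    single_le_sum (fun x _ => (hw _ x).le) (mem_filter.2 ⟨hg, rfl⟩)
  linarith [h.gain_lt_weight hw hg]

lemma exists_moved_eq_owner (h : IsMinimalImprovement w σ τ) (hw : ∀ i g, 0 < w i g)
    {g : M} (hg : g ∈ moved σ τ) : ∃ g' ∈ moved σ τ, τ g' = σ g := by
  by_contra! hnone
  have hval := value_add_sum_moved (w := w) σ τ (σ g)
  rw [filter_false_of_mem (s := moved σ τ) (p := (τ · = σ g)) fun x hx => hnone x hx, sum_empty,
    add_zero] at hval
  have hle : w (σ g) g ≤ ∑ x ∈ moved σ τ with σ x = σ g, w (σ g) x :=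
    single_le_sum (fun x _ => (hw _ x).le) (mem_filter.2 ⟨hg, rfl⟩)
  linarith [h.improves.1 (σ g), hw (σ g) g]

/-- Otherwise the agent could keep `gO` and pass `gI` on instead, moving fewer goods. -/
lemma not_swap (h : IsMinimalImprovement w σ τ) {gI gO : M} (hI : gI ∈ moved σ τ)
    (hO : gO ∈ moved σ τ) (hIO : τ gI = σ gO) (hle₁ : w (σ gO) gI ≤ w (σ gO) gO)
    (hle₂ : w (τ gO) gO ≤ w (τ gO) gI) : False := by
  classical
  rw [mem_moved] at hI hO
  have hne : gI ≠ gO := fun heq => hO (heq ▸ hIO).symm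
  set τ' := update (update τ gO (σ gO)) gI (τ gO)
  have hτ'I : τ' gI = τ gO := update_self ..
  have hτ'O : τ' gO = σ gO := by simp [τ', update_of_ne hne.symm]
  have hτ' : ∀ x, x ≠ gI → x ≠ gO → τ' x = τ x := fun x hxI hxO => by
    simp [τ', update_of_ne hxI, update_of_ne hxO]
  have hsub : moved σ τ' ⊂ moved σ τ := moved_ssubset (g := gO) (fun x hx => by
    by_cases hxI : x = gI
    · exact hxI ▸ hI
    by_cases hxO : x = gO
    · exact absurd (hxO ▸ hτ'O).symm (hxO ▸ hx)
    · rwa [hτ' x hxI hxO] at hx) hO hτ'O.symm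
  have hval : ∀ i,
      value w τ' i + ((if σ gO = i then w i gI else 0) + if τ gO = i then w i gO else 0) =
        value w τ i + ((if τ gO = i then w i gI else 0) + if σ gO = i then w i gO else 0) :=
    fun i => by
      have := value_add_sum_filter (w := w) (σ := τ) (τ := τ') (D := {gI, gO}) (fun x hx => by
        simp only [mem_insert, mem_singleton, not_or] at hx
        exact (hτ' x hx.1 hx.2).symm) i
      rwa [sum_filter, sum_filter, sum_pair hne, sum_pair hne, hτ'I, hτ'O, hIO] at this
  obtain ⟨i, hi⟩ := h.exists_value_lt hsub
  have := hval i
  split_ifs at this with h₁ h₂ <;> subst_vars <;> omega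

/-- Otherwise undoing the cycle would give an improvement moving fewer goods. -/
lemma not_cycle (h : IsMinimalImprovement w σ τ) {K : ℕ} {c : Fin (K + 2) → Fin n}
    (hc : Injective c) {q : Fin (K + 2) → M} (hσ : ∀ t, σ (q t) = c t)
    (hτ : ∀ t, τ (q t) = c (t + 1)) (hle : ∀ t, w (c (t + 1)) (q t) ≤ w (c (t + 1)) (q (t + 1))) :
    False := by
  have hc' : Injective fun t => c (t + 1) := hc.comp (add_left_injective 1)
  have hτP : ∀ t, ∀ g ∈ ({q t} : Finset M), τ g = c (t + 1) := fun t g hg => by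
    rw [mem_singleton.1 hg, hτ]
  obtain ⟨τ', hτ', hout⟩ := exists_permute_bundles hc' hτP (Equiv.subRight 1)
  have hrevert : ∀ t, τ' (q t) = σ (q t) := fun t => by
    simpa [hσ] using hτ' t (q t) (mem_singleton_self _)
  have hsub : moved σ τ' ⊂ moved σ τ := by
    refine moved_ssubset (g := q 0) (fun x hx => ?_) (by simp [hσ, hτ, hc.eq_iff]) (hrevert 0).symm
    by_cases hq : ∃ t, x = q t
    · obtain ⟨t, rfl⟩ := hq
      exact absurd (hrevert t).symm hx
    · push Not at hq
      rwa [hout x fun t hx' => hq t (mem_singleton.1 hx')] at hx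
  obtain ⟨i, hi⟩ := h.exists_value_lt hsub
  by_cases hic : ∃ s, c (s + 1) = i
  · obtain ⟨s, rfl⟩ := hic
    have hval : value w τ' (c (s + 1)) + w (c (s + 1)) (q s) =
        value w τ (c (s + 1)) + w (c (s + 1)) (q (s + 1)) := by
      simpa [value] using sum_bundleOf_permute hc' hτP hτ' hout (w (c (s + 1))) s
    linarith [hle s]
  · push Not at hic
    exact hi.ne (sum_bundleOf_permute_of_forall_ne hτP hτ' hout (w i) hic)

end IsMinimalImprovement

end MinimalImprovement

section Weights

variable {u : Fin n → M → ℝ} {a b : Fin n → ℝ} {R : Fin n → ℕ}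

/-- Utilities divided by `b i`, when `a i = R i * b i`. -/
noncomputable def weight (u : Fin n → M → ℝ) (a : Fin n → ℝ) (R : Fin n → ℕ) (i : Fin n)
    (g : M) : ℤ :=
  if u i g = a i then R i else 1

lemma weight_of_large {i : Fin n} {g : M} (h : u i g = a i) : weight u a R i g = R i := if_pos h

lemma weight_of_small {i : Fin n} {g : M} (h : u i g ≠ a i) : weight u a R i g = 1 := if_neg h

lemma one_le_weight (hR : ∀ i, 0 < R i) (i : Fin n) (g : M) : 1 ≤ weight u a R i g := by
  unfold weight; split_ifs <;> simp [Nat.one_le_cast.2 (hR i)]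

lemma weight_le (hR : ∀ i, 0 < R i) (i : Fin n) (g : M) : weight u a R i g ≤ R i := by
  unfold weight; split_ifs <;> simp [Nat.one_le_cast.2 (hR i)]

lemma util_bundleOf_eq [Fintype M] [DecidableEq M] (hb : ∀ i, 0 < b i)
    (hbi : ∀ i g, u i g = a i ∨ u i g = b i) (hratio : ∀ i, a i / b i = R i) (σ : M → Fin n)
    (i : Fin n) :
    util u i (bundleOf σ i) = b i * value (weight u a R) σ i := by
  rw [util, value, Int.cast_sum, mul_sum]
  refine sum_congr rfl fun g _ => ?_
  unfold weight
  split_ifs with h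
  · simp [h, (div_eq_iff (hb i).ne').1 (hratio i), mul_comm]
  · simp [(hbi i g).resolve_left h]

lemma improves_of_paretoDominates [Fintype M] [DecidableEq M] (hb : ∀ i, 0 < b i)
    (hbi : ∀ i g, u i g = a i ∨ u i g = b i) (hratio : ∀ i, a i / b i = R i) {σ τ : M → Fin n}
    (h : ParetoDominates u (bundleOf τ) (bundleOf σ)) : Improves (weight u a R) σ τ := by
  simp only [ParetoDominates, util_bundleOf_eq hb hbi hratio, mul_le_mul_iff_right₀ (hb _),
    mul_lt_mul_iff_right₀ (hb _), Int.cast_le, Int.cast_lt] at h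
  exact h

end Weights

namespace IsMinimalImprovement

variable [Fintype M] {u : Fin n → M → ℝ} {a : Fin n → ℝ} {R : Fin n → ℕ} {σ τ : M → Fin n}

lemma large_target_of_large_owner (h : IsMinimalImprovement (weight u a R) σ τ)
    (hR : ∀ i, 0 < R i) {g : M} (hg : g ∈ moved σ τ) (hL : u (σ g) g = a (σ g)) :
    u (τ g) g = a (τ g) := by
  by_contra hS
  obtain ⟨gI, hI, hIg⟩ := h.exists_moved_eq_owner (one_le_weight hR) hg
  refine h.not_swap hI hg hIg ?_ ?_
  · rw [weight_of_large hL]; exact weight_le hR _ _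
  · rw [weight_of_small hS]; exact one_le_weight hR _ _

lemma not_small_in_small_out (h : IsMinimalImprovement (weight u a R) σ τ) (hR : ∀ i, 0 < R i)
    {gI gO : M} (hI : gI ∈ moved σ τ) (hO : gO ∈ moved σ τ) (hIO : τ gI = σ gO)
    (hsI : u (τ gI) gI ≠ a (τ gI)) (hsO : u (τ gO) gO ≠ a (τ gO)) : False := by
  refine h.not_swap hI hO hIO ?_ ?_
  · rw [← hIO, weight_of_small hsI]; exact one_le_weight hR _ _
  · rw [weight_of_small hsO]; exact one_le_weight hR _ _

lemma value_eq_of_small_in (h : IsMinimalImprovement (weight u a R) σ τ) (hR : ∀ i, 0 < R i)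
    {g : M} (hg : g ∈ moved σ τ) (hs : u (τ g) g ≠ a (τ g)) :
    value (weight u a R) τ (τ g) = value (weight u a R) σ (τ g) := by
  have := h.gain_lt_weight (one_le_weight hR) hg
  rw [weight_of_small hs] at this
  linarith [h.improves.1 (τ g)]

end IsMinimalImprovement

structure IsLargeChain (u : Fin n → M → ℝ) (a : Fin n → ℝ) (σ : M → Fin n) (L : ℕ)
    (c : ℕ → Fin n) (p : ℕ → M) : Prop where
  injOn : Set.InjOn c (Set.Iic L)
  owner : ∀ t < L, σ (p t) = c t
  large : ∀ t < L, u (c t) (p t) = a (c t)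
  large_succ : ∀ t < L, u (c (t + 1)) (p t) = a (c (t + 1))

namespace IsLargeChain

variable {u : Fin n → M → ℝ} {a b : Fin n → ℝ} {σ : M → Fin n} {L : ℕ} {c : ℕ → Fin n}
  {p : ℕ → M}

lemma agent_ne (hc : IsLargeChain u a σ L c p) {s t : ℕ} (hs : s ≤ L) (ht : t ≤ L) (hst : s ≠ t) :
    c s ≠ c t :=
  fun h => hst (hc.injOn (Set.mem_Iic.2 hs) (Set.mem_Iic.2 ht) h)

lemma mono (hc : IsLargeChain u a σ L c p) {L' : ℕ} (hL : L' ≤ L) : IsLargeChain u a σ L' c p :=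
  ⟨hc.injOn.mono (Set.Iic_subset_Iic.2 hL), fun t ht => hc.owner t (by omega),
    fun t ht => hc.large t (by omega), fun t ht => hc.large_succ t (by omega)⟩

lemma drop (hc : IsLargeChain u a σ L c p) {s : ℕ} (hs : s ≤ L) :
    IsLargeChain u a σ (L - s) (fun t => c (s + t)) (fun t => p (s + t)) :=
  ⟨fun t ht t' ht' h => by
      simpa using hc.injOn (Set.mem_Iic.2 (by simp at ht; omega) : s + t ∈ Set.Iic L)
        (Set.mem_Iic.2 (by simp at ht'; omega)) h,
    fun t ht => hc.owner _ (by omega), fun t ht => hc.large _ (by omega),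
    fun t ht => by simpa [add_assoc] using hc.large_succ (s + t) (by omega)⟩

lemma length_lt (hc : IsLargeChain u a σ L c p) : L < n := by
  have := card_le_card_of_injOn c (s := range (L + 1)) (t := univ) (fun _ _ => mem_univ _)
    fun s hs t ht h => hc.injOn (Set.mem_Iic.2 (by simp at hs; omega))
      (Set.mem_Iic.2 (by simp at ht; omega)) h
  simpa using this

variable [Fintype M] [DecidableEq M]

/-- The witness has agents `s, c 0, …, c m` and goods `x, p 0, …, p (m - 1), y`. -/
lemma typeIWitness (hab : ∀ i, b i < a i) (hbi : ∀ i g, u i g = a i ∨ u i g = b i)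
    {m : ℕ} (hc : IsLargeChain u a σ m c p) {s : Fin n} (hs : ∀ t ≤ m, c t ≠ s) {x y : M}
    (hx : σ x = s) (hxs : u s x ≠ a s) (hx0 : u (c 0) x = a (c 0)) (hy : σ y = c m)
    (hy' : u (c m) y = a (c m) → u s y = a s) : TypeIWitness u a b (bundleOf σ) := by
  refine ⟨m + 2, fun t => if t = 0 then s else c (t - 1),
    fun t => if t = 0 then x else if t ≤ m then p (t - 1) else y, by omega, ?_, ?_,
    by simpa using (hbi s x).resolve_left hxs, by simpa using hx0, ?_, ?_⟩
  · intro t ht t' ht' htt'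
    rcases Nat.eq_zero_or_pos t with rfl | ht0 <;> rcases Nat.eq_zero_or_pos t' with rfl | ht0'
    · exact absurd rfl htt'
    · simpa [ht0'.ne'] using (hs (t' - 1) (by omega)).symm
    · simpa [ht0.ne'] using hs (t - 1) (by omega)
    · simpa [ht0.ne', ht0'.ne'] using
        hc.agent_ne (s := t - 1) (t := t' - 1) (by omega) (by omega) (by omega)
  · intro t ht
    rcases Nat.eq_zero_or_pos t with rfl | ht0
    · simpa using hx
    · by_cases htm : t ≤ m
      · simpa [ht0.ne', htm] using hc.owner (t - 1) (by omega)
      · obtain rfl : t = m + 1 := by omega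
        simpa using hy
  · intro t ht1 ht2
    have := hc.large_succ (t - 1) (by omega)
    simp only [show t - 1 + 1 = t by omega] at this
    simpa [show t ≠ 0 by omega, show t ≤ m by omega] using ⟨hc.large (t - 1) (by omega), this⟩
  · simp only [show m + 2 - 1 = m + 1 from rfl, if_neg (Nat.succ_ne_zero m),
      if_neg (Nat.not_succ_le_self m), Nat.add_sub_cancel, if_true]
    rintro ⟨hl, hsm⟩
    exact (hab s).ne (hsm ▸ hy' hl)

/-- Otherwise the agents `c L, c t, …, c (L - 1)` with the goods `x, p t, …, p (L - 1)` form a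
Type I witness. -/
lemma small_of_small_last (hab : ∀ i, b i < a i) (hbi : ∀ i g, u i g = a i ∨ u i g = b i)
    (hNoI : ¬ TypeIWitness u a b (bundleOf σ)) (hc : IsLargeChain u a σ L c p) {x : M}
    (hx : σ x = c L) (hxs : u (c L) x ≠ a (c L)) {t : ℕ} (ht : t ≤ L) : u (c t) x ≠ a (c t) := by
  rcases ht.eq_or_lt with rfl | ht
  · exact hxs
  intro hxt
  refine hNoI (((hc.drop ht.le).mono (L' := L - 1 - t) (by omega)).typeIWitness hab hbi
    (fun t' ht' => hc.agent_ne (by omega) le_rfl (by omega)) hx hxs (by simpa using hxt)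
    (y := p (L - 1)) ?_ fun _ => ?_)
  · simpa [show t + (L - 1 - t) = L - 1 by omega] using hc.owner (L - 1) (by omega)
  · simpa [show L - 1 + 1 = L by omega] using hc.large_succ (L - 1) (by omega)

lemma typeIIWitness (hc : IsLargeChain u a σ L c p) (hL : 0 < L) {H : Finset M}
    (hH : H.Nonempty) (hratio : a (c 0) / b (c 0) = #H)
    (hlt : a (c 0) / b (c 0) < a (c L) / b (c L))
    (hHσ : ∀ x ∈ H, σ x = c L ∧ u (c L) x = b (c L) ∧ u (c 0) x = b (c 0)) :
    TypeIIWitness u a b (bundleOf σ) := by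
  set h : ℕ → M := fun j => if hj : j < #H then H.equivFin.symm ⟨j, hj⟩ else hH.choose
  have hmem : ∀ j < #H, h j ∈ H := fun j hj => by simp [h, hj]
  refine ⟨L + 1, #H, c, h, p, by omega, hH.card_pos, fun s hs t ht => hc.agent_ne (by omega)
    (by omega), hratio, hlt, fun j hj j' hj' hne heq => hne ?_, fun j hj => ?_, fun t ht => ?_⟩
  · simpa [h, hj, hj', Subtype.ext_iff] using heq
  · simpa [mem_bundleOf] using hHσ _ (hmem j hj)
  · simpa [mem_bundleOf] using ⟨hc.owner t (by omega), hc.large t (by omega),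
      hc.large_succ t (by omega)⟩

end IsLargeChain

structure IsTransferPath (u : Fin n → M → ℝ) (a : Fin n → ℝ) (σ τ : M → Fin n) (L : ℕ)
    (c : ℕ → Fin n) (p : ℕ → M) : Prop extends IsLargeChain u a σ L c p where
  target : ∀ t < L, τ (p t) = c (t + 1)

namespace IsTransferPath

variable {u : Fin n → M → ℝ} {a : Fin n → ℝ} {σ τ : M → Fin n} {L : ℕ} {c : ℕ → Fin n}
  {p : ℕ → M}

lemma nil (v : Fin n) (p : ℕ → M) : IsTransferPath u a σ τ 0 (fun _ => v) p :=
  ⟨⟨fun s hs t ht _ => by simp_all, by simp, by simp, by simp⟩, by simp⟩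

lemma drop (hP : IsTransferPath u a σ τ L c p) {s : ℕ} (hs : s ≤ L) :
    IsTransferPath u a σ τ (L - s) (fun t => c (s + t)) (fun t => p (s + t)) :=
  ⟨hP.toIsLargeChain.drop hs, fun t ht => by simpa [add_assoc] using hP.target (s + t) (by omega)⟩

lemma snoc (hP : IsTransferPath u a σ τ L c p) {g : M} (hg : σ g = c L)
    (hgL : u (c L) g = a (c L)) (hgτ : u (τ g) g = a (τ g)) (hnew : ∀ t ≤ L, c t ≠ τ g) :
    IsTransferPath u a σ τ (L + 1) (update c (L + 1) (τ g)) (update p L g) := by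
  have hc : ∀ t ≤ L, update c (L + 1) (τ g) t = c t := fun t ht => update_of_ne (by omega) _ _
  refine ⟨⟨fun s hs t ht hst => ?_, fun t ht => ?_, fun t ht => ?_, fun t ht => ?_⟩,
    fun t ht => ?_⟩
  · simp only [Set.mem_Iic] at hs ht
    rcases Nat.lt_or_ge L s with hs' | hs' <;> rcases Nat.lt_or_ge L t with ht' | ht'
    · omega
    · rw [show s = L + 1 by omega, update_self, hc t ht'] at hst
      exact absurd hst.symm (hnew t ht')
    · rw [show t = L + 1 by omega, update_self, hc s hs'] at hst
      exact absurd hst (hnew s hs')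
    · rw [hc s hs', hc t ht'] at hst
      exact hP.injOn (Set.mem_Iic.2 hs') (Set.mem_Iic.2 ht') hst
  all_goals
    rcases Nat.lt_or_ge t L with htL | htL
    · simp [update_of_ne htL.ne, hc t htL.le, hc (t + 1) htL, hP.owner t htL, hP.large t htL,
        hP.large_succ t htL, hP.target t htL]
    · obtain rfl : t = L := by omega
      simp [hg, hgL, hgτ]

end IsTransferPath

namespace IsMinimalImprovement

variable [Fintype M] {u : Fin n → M → ℝ} {a : Fin n → ℝ} {R : Fin n → ℕ} {σ τ : M → Fin n}
  {L : ℕ} {c : ℕ → Fin n} {p : ℕ → M}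

lemma not_transferPath_cycle (h : IsMinimalImprovement (weight u a R) σ τ)
    (hP : IsTransferPath u a σ τ L c p) (hL : 0 < L) {g : M} (hg : σ g = c L) (hgτ : τ g = c 0)
    (hgL : u (c L) g = a (c L)) (hg0 : u (c 0) g = a (c 0)) : False := by
  obtain ⟨K, rfl⟩ : ∃ K, L = K + 1 := ⟨L - 1, by omega⟩
  set q : Fin (K + 2) → M := fun t => if (t : ℕ) ≤ K then p t else g
  have hsucc : ∀ t : Fin (K + 2),
      ((t + 1 : Fin (K + 2)) : ℕ) = if (t : ℕ) ≤ K then (t : ℕ) + 1 else 0 := fun t => by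
    rw [Fin.val_add_one]
    simp only [Fin.ext_iff, Fin.val_last]
    split_ifs <;> omega
  have hσ : ∀ t, σ (q t) = c t := fun t => by
    by_cases ht : (t : ℕ) ≤ K
    · simpa [q, ht] using hP.owner t (by omega)
    · simpa [q, ht, show (t : ℕ) = K + 1 by omega] using hg
  have hτ : ∀ t, τ (q t) = c ↑(t + 1) := fun t => by
    by_cases ht : (t : ℕ) ≤ K
    · simpa [q, ht, hsucc] using hP.target t (by omega)
    · simpa [q, ht, hsucc] using hgτ
  have hown : ∀ t : Fin (K + 2), u (c t) (q t) = a (c t) := fun t => by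
    by_cases ht : (t : ℕ) ≤ K
    · simpa [q, ht] using hP.large t (by omega)
    · simpa [q, ht, show (t : ℕ) = K + 1 by omega] using hgL
  have htgt : ∀ t : Fin (K + 2), u (c ↑(t + 1)) (q t) = a (c ↑(t + 1)) := fun t => by
    by_cases ht : (t : ℕ) ≤ K
    · simpa [q, ht, hsucc] using hP.large_succ t (by omega)
    · simpa [q, ht, hsucc] using hg0
  refine h.not_cycle (c := fun t : Fin (K + 2) => c t) (fun s t hst => Fin.ext ?_) hσ hτ
    fun t => by rw [weight_of_large (htgt t), weight_of_large (hown (t + 1))]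
  exact hP.injOn (Set.mem_Iic.2 (by omega)) (Set.mem_Iic.2 (by omega)) hst

lemma transferPath_snoc (h : IsMinimalImprovement (weight u a R) σ τ) (hR : ∀ i, 0 < R i)
    (hP : IsTransferPath u a σ τ L c p) {g : M} (hgm : g ∈ moved σ τ) (hg : σ g = c L)
    (hgL : u (c L) g = a (c L)) :
    IsTransferPath u a σ τ (L + 1) (update c (L + 1) (τ g)) (update p L g) := by
  have hgτ := h.large_target_of_large_owner hR hgm (hg ▸ hgL)
  refine hP.snoc hg hgL hgτ fun t ht hct => ?_
  rcases ht.eq_or_lt with rfl | ht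
  · exact mem_moved.1 hgm (hg.trans hct)
  · exact h.not_transferPath_cycle (hP.drop ht.le) (by omega) (by simpa [Nat.add_sub_cancel' ht.le])
      (by simpa using hct.symm) (by simpa [Nat.add_sub_cancel' ht.le]) (by simpa [hct])

/-- Otherwise a transfer path from the recipient could be extended forever: its last agent
receives a good, so gives one away, which is large for it and small for the owner of `g` (no Type I
witness), hence large for its recipient, who is new (`not_transferPath_cycle`). -/
lemma large_owner_of_large_target (h : IsMinimalImprovement (weight u a R) σ τ)
    (hR : ∀ i, 0 < R i) {b : Fin n → ℝ} (hab : ∀ i, b i < a i)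
    (hbi : ∀ i g, u i g = a i ∨ u i g = b i) [DecidableEq M]
    (hNoI : ¬ TypeIWitness u a b (bundleOf σ)) {g : M} (hg : g ∈ moved σ τ)
    (hL : u (τ g) g = a (τ g)) : u (σ g) g = a (σ g) := by
  by_contra hs
  have grow : ∀ m, ∃ c p, IsTransferPath u a σ τ m c p ∧ c 0 = τ g ∧ ∀ t ≤ m, c t ≠ σ g := by
    intro m
    induction m with
    | zero => exact ⟨fun _ => τ g, fun _ => g, .nil _ _, rfl, fun _ _ => (mem_moved.1 hg).symm⟩
    | succ m ih =>
      obtain ⟨c, p, hP, hc0, hcs⟩ := ih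
      have hend : ∀ y, σ y = c m → u (c m) y = a (c m) ∧ u (σ g) y ≠ a (σ g) := fun y hy => by
        by_contra hy'
        exact hNoI (hP.typeIWitness hab hbi hcs rfl hs (hc0 ▸ hL) hy fun hl => by
          by_contra hsy; exact hy' ⟨hl, hsy⟩)
      have hin : ∃ gI ∈ moved σ τ, τ gI = c m := by
        rcases Nat.eq_zero_or_pos m with rfl | hm
        · exact ⟨g, hg, hc0.symm⟩
        · refine ⟨p (m - 1), mem_moved.2 ?_, by
            simpa [Nat.sub_add_cancel hm] using hP.target (m - 1) (by omega)⟩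
          rw [hP.owner _ (by omega), hP.target _ (by omega), Nat.sub_add_cancel hm]
          exact hP.agent_ne (by omega) le_rfl (by omega)
      obtain ⟨gI, hgI, hgIm⟩ := hin
      obtain ⟨gO, hgO, hgOm⟩ := h.exists_moved_eq_target (one_le_weight hR) hgI
      rw [hgIm] at hgOm
      have hgOτ := h.large_target_of_large_owner hR hgO (hgOm ▸ (hend gO hgOm).1)
      refine ⟨_, _, h.transferPath_snoc hR hP hgO hgOm (hend gO hgOm).1, by simpa using hc0,
        fun t ht => ?_⟩
      rcases ht.eq_or_lt with rfl | ht
      · simp only [update_self]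
        exact fun heq => (hend gO hgOm).2 (heq ▸ hgOτ)
      · simpa [update_of_ne ht.ne] using hcs t (by omega)
  obtain ⟨c, p, hP, -⟩ := grow n
  exact lt_irrefl n hP.length_lt

end IsMinimalImprovement

section Potential

variable {u : Fin n → M → ℝ} {a : Fin n → ℝ} {R : Fin n → ℕ} {σ τ : M → Fin n}

noncomputable def potential (u : Fin n → M → ℝ) (a : Fin n → ℝ) (R : Fin n → ℕ)
    (σ τ : M → Fin n) (v : Fin n) : ℕ :=
  sInf {r | ∃ L c p, IsTransferPath u a σ τ L c p ∧ c L = v ∧ R (c 0) = r}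

lemma potential_le_of_transferPath {L : ℕ} {c : ℕ → Fin n} {p : ℕ → M}
    (hP : IsTransferPath u a σ τ L c p) : potential u a R σ τ (c L) ≤ R (c 0) :=
  Nat.sInf_le ⟨L, c, p, hP, rfl, rfl⟩

variable [Nonempty M]

lemma potential_le (v : Fin n) : potential u a R σ τ v ≤ R v :=
  potential_le_of_transferPath (L := 0) (.nil v fun _ => Classical.arbitrary M)

lemma exists_transferPath_potential (v : Fin n) : ∃ L c p, IsTransferPath u a σ τ L c p ∧
    c L = v ∧ R (c 0) = potential u a R σ τ v :=
  Nat.sInf_mem (s := {r | ∃ L c p, IsTransferPath u a σ τ L c p ∧ c L = v ∧ R (c 0) = r})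
    ⟨R v, 0, _, _, .nil v fun _ => Classical.arbitrary M, rfl, rfl⟩

lemma potential_pos (hR : ∀ i, 0 < R i) (v : Fin n) : 0 < potential u a R σ τ v := by
  obtain ⟨L, c, p, -, -, hc⟩ := exists_transferPath_potential (u := u) (a := a) (R := R)
    (σ := σ) (τ := τ) v
  exact hc ▸ hR _

/-- Otherwise `potential` of these goods, small also for the start of a transfer path realizing the
potential (`small_of_small_last`), give a Type II witness along that path. -/
lemma card_small_lt_potential [Fintype M] [DecidableEq M] (hR : ∀ i, 0 < R i) {b : Fin n → ℝ}
    (hab : ∀ i, b i < a i)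
    (hbi : ∀ i g, u i g = a i ∨ u i g = b i) (hratio : ∀ i, a i / b i = R i)
    (hNoI : ¬ TypeIWitness u a b (bundleOf σ)) (hNoII : ¬ TypeIIWitness u a b (bundleOf σ))
    {i : Fin n} (hlt : potential u a R σ τ i < R i) :
    #{x | σ x = i ∧ u i x ≠ a i} < potential u a R σ τ i := by
  obtain ⟨L, c, p, hP, rfl, hc0⟩ := exists_transferPath_potential (u := u) (a := a) (R := R)
    (σ := σ) (τ := τ) i
  have hL : 0 < L := Nat.pos_of_ne_zero fun hL => by subst hL; omega
  by_contra! hle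
  obtain ⟨H, hHS, hH⟩ := exists_subset_card_eq hle
  have hHsmall : ∀ x ∈ H, σ x = c L ∧ u (c L) x ≠ a (c L) := fun x hx => by
    simpa using hHS hx
  refine hNoII (hP.typeIIWitness hL (H := H) (card_pos.1 (hH ▸ potential_pos hR _)) ?_ ?_
    fun x hx => ⟨(hHsmall x hx).1, ?_, ?_⟩)
  · rw [hratio, hH, hc0]
  · rw [hratio, hratio, hc0]; exact_mod_cast hlt
  · exact (hbi _ _).resolve_left (hHsmall x hx).2
  · exact (hbi _ _).resolve_left
      (hP.small_of_small_last hab hbi hNoI (hHsmall x hx).1 (hHsmall x hx).2 (Nat.zero_le _))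

namespace IsMinimalImprovement

variable [Fintype M]

lemma potential_target_le (h : IsMinimalImprovement (weight u a R) σ τ) (hR : ∀ i, 0 < R i)
    {g : M} (hg : g ∈ moved σ τ) (hL : u (σ g) g = a (σ g)) :
    potential u a R σ τ (τ g) ≤ potential u a R σ τ (σ g) := by
  obtain ⟨L, c, p, hP, hcL, hc0⟩ := exists_transferPath_potential (u := u) (a := a) (R := R)
    (σ := σ) (τ := τ) (σ g)
  have := potential_le_of_transferPath (R := R)
    (h.transferPath_snoc hR hP hg hcL.symm (hcL ▸ hL))
  simpa [hc0] using this

end IsMinimalImprovement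

end Potential

lemma sum_weight {u : Fin n → M → ℝ} {a : Fin n → ℝ} (X : Fin n → ℕ) (S : Finset M) (i : Fin n) :
    ∑ g ∈ S, weight u a X i g = X i * #{g ∈ S | u i g = a i} + #{g ∈ S | u i g ≠ a i} := by
  simp [weight, sum_ite, mul_comm]

/-- For an agent with potential `P` and ratio `R` that receives `inL` large and `inS` small goods
and gives away `outL` large and `outS` small goods. -/
lemma potential_balance {P R inL inS outL outS : ℤ} (hP : 1 ≤ P) (hPR : P ≤ R) (hinS : 0 ≤ inS)
    (houtS : 0 ≤ outS) (hδ : 0 ≤ R * inL + inS - (R * outL + outS))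
    (hin : 0 < inS → R * inL + inS - (R * outL + outS) = 0 ∧ outS = 0)
    (hout : P < R → outS < P) :
    P * outL + outS - (P * inL + inS) + min (R * inL + inS - (R * outL + outS)) 1 ≤ 0 := by
  rcases hinS.lt_or_eq with hpos | rfl
  · obtain ⟨hδ0, rfl⟩ := hin hpos
    have hd : 0 ≤ outL - inL := by nlinarith
    nlinarith [mul_le_mul_of_nonneg_right hPR hd, min_le_left (R * inL + inS - (R * outL + 0)) 1]
  · rcases houtS.lt_or_eq with hpos | rfl
    · have hd : 1 ≤ inL - outL := by nlinarith
      rcases hPR.lt_or_eq with hlt | rfl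
      · nlinarith [hout hlt, min_le_right (R * inL + 0 - (R * outL + outS)) 1]
      · nlinarith [min_le_left (P * inL + 0 - (P * outL + outS)) 1]
    · have hd : 0 ≤ inL - outL := by nlinarith
      rcases hd.lt_or_eq with hd | hd
      · nlinarith [min_le_right (R * inL + 0 - (R * outL + 0)) 1]
      · obtain rfl : inL = outL := by linarith
        simp

namespace IsMinimalImprovement

variable [Fintype M] [DecidableEq M] {u : Fin n → M → ℝ} {a b : Fin n → ℝ} {R : Fin n → ℕ}
  {σ τ : M → Fin n}

lemma large_owner_iff_large_target (h : IsMinimalImprovement (weight u a R) σ τ)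
    (hR : ∀ i, 0 < R i) (hab : ∀ i, b i < a i) (hbi : ∀ i g, u i g = a i ∨ u i g = b i)
    (hNoI : ¬ TypeIWitness u a b (bundleOf σ)) {g : M} (hg : g ∈ moved σ τ) :
    u (σ g) g = a (σ g) ↔ u (τ g) g = a (τ g) :=
  ⟨h.large_target_of_large_owner hR hg, h.large_owner_of_large_target hR hab hbi hNoI hg⟩

lemma potential_flow_le (h : IsMinimalImprovement (weight u a R) σ τ) [Nonempty M]
    (hR : ∀ i, 0 < R i) (hab : ∀ i, b i < a i) (hbi : ∀ i g, u i g = a i ∨ u i g = b i)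
    (hratio : ∀ i, a i / b i = R i) (hNoI : ¬ TypeIWitness u a b (bundleOf σ))
    (hNoII : ¬ TypeIIWitness u a b (bundleOf σ)) (i : Fin n) :
    ∑ g ∈ moved σ τ with σ g = i, weight u a (potential u a R σ τ) i g -
        ∑ g ∈ moved σ τ with τ g = i, weight u a (potential u a R σ τ) i g +
      min (value (weight u a R) τ i - value (weight u a R) σ i) 1 ≤ 0 := by
  have hgain : value (weight u a R) τ i - value (weight u a R) σ i =
      ∑ g ∈ moved σ τ with τ g = i, weight u a R i g -
        ∑ g ∈ moved σ τ with σ g = i, weight u a R i g := by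
    linarith [value_add_sum_moved (w := weight u a R) σ τ i]
  have hgain0 := sub_nonneg.2 (h.improves.1 i)
  rw [hgain] at hgain0 ⊢
  simp only [sum_weight] at hgain hgain0 ⊢
  refine potential_balance (Nat.one_le_cast.2 (potential_pos hR i)) (Nat.cast_le.2 (potential_le i))
    (Nat.cast_nonneg _) (Nat.cast_nonneg _) hgain0 (fun hin => ?_) fun hlt => ?_
  · obtain ⟨gI, hgI⟩ := card_pos.1 (Nat.cast_pos.1 hin)
    simp only [mem_filter] at hgI
    obtain ⟨⟨hgIm, rfl⟩, hgIs⟩ := hgI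
    refine ⟨by rw [← hgain]; linarith [h.value_eq_of_small_in hR hgIm hgIs], ?_⟩
    rw [Nat.cast_eq_zero, card_eq_zero, filter_eq_empty_iff]
    intro gO hgO hgOs
    simp only [mem_filter] at hgO
    refine h.not_small_in_small_out hR hgIm hgO.1 hgO.2.symm hgIs fun hl => hgOs ?_
    exact hgO.2 ▸ (h.large_owner_iff_large_target hR hab hbi hNoI hgO.1).2 hl
  · refine lt_of_le_of_lt (Nat.cast_le.2 (card_le_card fun x hx => ?_))
      (Nat.cast_lt.2 (card_small_lt_potential hR hab hbi hratio hNoI hNoII (Nat.cast_lt.1 hlt)))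
    simp only [mem_filter] at hx ⊢
    exact ⟨mem_univ _, hx.1.2, hx.2⟩

/-- The left-hand sides of `potential_flow_le` sum to at least `1`: each moved good that is large
for its owner goes to an agent of no larger potential. -/
lemma false_of_no_witness (h : IsMinimalImprovement (weight u a R) σ τ) (hR : ∀ i, 0 < R i)
    (hab : ∀ i, b i < a i) (hbi : ∀ i g, u i g = a i ∨ u i g = b i)
    (hratio : ∀ i, a i / b i = R i) (hNoI : ¬ TypeIWitness u a b (bundleOf σ))
    (hNoII : ¬ TypeIIWitness u a b (bundleOf σ)) : False := by
  obtain ⟨hle, j, hj⟩ := h.improves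
  have : Nonempty M := by
    by_contra hM
    simp [value, bundleOf, not_nonempty_iff.1 hM] at hj
  have hfiber : ∀ (W : Fin n → M → ℤ) (f : M → Fin n),
      ∑ i, ∑ g ∈ moved σ τ with f g = i, W i g = ∑ g ∈ moved σ τ, W (f g) g := fun W f => by
    rw [← sum_fiberwise (moved σ τ) f fun g => W (f g) g]
    exact sum_congr rfl fun i _ => sum_congr rfl fun g hg => by rw [(mem_filter.1 hg).2]
  have hflow : 0 ≤ ∑ i, (∑ g ∈ moved σ τ with σ g = i, weight u a (potential u a R σ τ) i g -
      ∑ g ∈ moved σ τ with τ g = i, weight u a (potential u a R σ τ) i g) := by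
    rw [sum_sub_distrib, hfiber, hfiber, sub_nonneg]
    refine sum_le_sum fun g hg => ?_
    by_cases hL : u (σ g) g = a (σ g)
    · rw [weight_of_large hL, weight_of_large (h.large_target_of_large_owner hR hg hL)]
      exact_mod_cast h.potential_target_le hR hg hL
    · rw [weight_of_small hL, weight_of_small
        ((h.large_owner_iff_large_target hR hab hbi hNoI hg).not.1 hL)]
  have hgain : 1 ≤ ∑ i, min (value (weight u a R) τ i - value (weight u a R) σ i) 1 :=
    (min_eq_right (by linarith)).symm.le.trans
      (single_le_sum (fun i _ => le_min (sub_nonneg.2 (hle i)) zero_le_one) (mem_univ j))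
  have := sum_le_sum fun i (_ : i ∈ univ) => h.potential_flow_le hR hab hbi hratio hNoI hNoII i
  rw [sum_add_distrib, sum_const_zero] at this
  linarith

end IsMinimalImprovement

end

/-- In a personalized bi-valued instance in which every ratio
`rᵢ = aᵢ / bᵢ` is a positive integer, an allocation is Pareto-optimal iff it admits
neither a Type I witness nor a Type II witness. -/
theorem paretoOptimal_iff_no_witness
    (n : ℕ) (M : Type*) [Fintype M] [DecidableEq M]
    (u : Fin n → M → ℝ) (a b : Fin n → ℝ)
    (hab : ∀ i, b i < a i) (hb : ∀ i, 0 < b i)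
    (hbi : ∀ i g, u i g = a i ∨ u i g = b i)
    (hint : ∀ i, ∃ R : ℕ, 0 < R ∧ a i / b i = (R : ℝ))
    (X : Fin n → Finset M) (hX : IsAllocation X) :
    IsParetoOptimal u X ↔ ¬ TypeIWitness u a b X ∧ ¬ TypeIIWitness u a b X := by
  refine ⟨fun hPO => ⟨fun hW => hPO (hW.exists_paretoDominates hab hbi hX),
    fun hW => hPO (hW.exists_paretoDominates hb hX)⟩, ?_⟩
  rintro ⟨hNoI, hNoII⟩ ⟨X', hX', hdom⟩
  choose R hR hratio using hint
  obtain ⟨σ, rfl⟩ := hX.exists_eq_bundleOf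
  obtain ⟨τ, rfl⟩ := hX'.exists_eq_bundleOf
  obtain ⟨τ, hτ⟩ := exists_isMinimalImprovement (improves_of_paretoDominates hb hbi hratio hdom)
  exact hτ.false_of_no_witness hR hab hbi hratio hNoI hNoII
end

section
/- Let X be an allocation of a personalized bi-valued instance and let X' be a minimal Pareto-improvement of X in which every transferred good is either large for both its giver and its receiver (an LL transfer) or small for both its giver and its receiver (an SS transfer). For each agent i, let L_i^out and L_i^in denote the number of LL transfers in which i is the giver and the receiver respectively, and let S_i^out and S_i^in denote the same for SS transfers. Then for every agent i: (a) S_i^out and S_i^in are not both positive; (b) if S_i^out > 0 then L_i^in > L_i^out; (c) if S_i^in > 0 then L_i^out > L_i^in; and (d) if S_i^out = S_i^in = 0 then L_i^out = L_i^in. -/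
open Finset

/-- Number of LL transfers (large for giver and receiver) from `X` to `X'` with `i` as giver. -/
noncomputable def LLout {n : ℕ} {M : Type*} [DecidableEq M] (u : Fin n → M → ℝ)
    (a : Fin n → ℝ) (X X' : Fin n → Finset M) (i : Fin n) : ℕ :=
  Set.ncard {g : M | g ∈ X i ∧ u i g = a i ∧ ∃ j, j ≠ i ∧ g ∈ X' j ∧ u j g = a j}

/-- Number of LL transfers (large for giver and receiver) from `X` to `X'` with `i` as receiver. -/
noncomputable def LLin {n : ℕ} {M : Type*} [DecidableEq M] (u : Fin n → M → ℝ)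
    (a : Fin n → ℝ) (X X' : Fin n → Finset M) (i : Fin n) : ℕ :=
  Set.ncard {g : M | g ∈ X' i ∧ u i g = a i ∧ ∃ j, j ≠ i ∧ g ∈ X j ∧ u j g = a j}

/-- Number of SS transfers (small for giver and receiver) from `X` to `X'` with `i` as giver. -/
noncomputable def SSout {n : ℕ} {M : Type*} [DecidableEq M] (u : Fin n → M → ℝ)
    (b : Fin n → ℝ) (X X' : Fin n → Finset M) (i : Fin n) : ℕ :=
  Set.ncard {g : M | g ∈ X i ∧ u i g = b i ∧ ∃ j, j ≠ i ∧ g ∈ X' j ∧ u j g = b j}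

/-- Number of SS transfers (small for giver and receiver) from `X` to `X'` with `i` as receiver. -/
noncomputable def SSin {n : ℕ} {M : Type*} [DecidableEq M] (u : Fin n → M → ℝ)
    (b : Fin n → ℝ) (X X' : Fin n → Finset M) (i : Fin n) : ℕ :=
  Set.ncard {g : M | g ∈ X' i ∧ u i g = b i ∧ ∃ j, j ≠ i ∧ g ∈ X j ∧ u j g = b j}

/-!
Agent `i`'s gain in `X'` is `a_i (L_in - L_out) + b_i (S_in - S_out) ≥ 0`. Minimality rules out two
local repairs of `X'`: giving a good that `i` received back to its original owner, which shows that
the gain is less than `i`'s value of every good she received, and, when `i` gives away a small good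
`g` and receives a small good `h`, letting `i` keep `g` and handing `h` to the receiver of `g`
instead. The first gives (b)–(d) by comparing the gain with `a_i` and `b_i`, the second gives (a).
-/

section Transfers

variable {n : ℕ} {M : Type*} [DecidableEq M]

/-- `transferCount X Y` is `(transferredGoods X Y).ncard` by definition. -/
def transferredGoods (X Y : Fin n → Finset M) : Set M :=
  {g | ∃ i, g ∈ X i ∧ g ∉ Y i}

def moveGood (Y : Fin n → Finset M) (g : M) (j : Fin n) : Fin n → Finset M :=
  fun l => if l = j then insert g (Y l) else (Y l).erase g

theorem mem_moveGood_self {Y : Fin n → Finset M} {g : M} {j l : Fin n} :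
    g ∈ moveGood Y g j l ↔ l = j := by
  unfold moveGood
  split_ifs with hl <;> simp [hl]

theorem mem_moveGood_of_ne {Y : Fin n → Finset M} {g w : M} {j l : Fin n} (hw : w ≠ g) :
    w ∈ moveGood Y g j l ↔ w ∈ Y l := by
  unfold moveGood
  split_ifs <;> simp [hw]

theorem IsAllocation.moveGood {Y : Fin n → Finset M} (hY : IsAllocation Y) (g : M) (j : Fin n) :
    IsAllocation (moveGood Y g j) := by
  refine ⟨fun w => ?_, fun l m hlm => Finset.disjoint_left.2 fun w hwl hwm => ?_⟩
  · by_cases hw : w = g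
    · exact ⟨j, hw ▸ mem_moveGood_self.2 rfl⟩
    · obtain ⟨l, hl⟩ := hY.1 w
      exact ⟨l, (mem_moveGood_of_ne hw).2 hl⟩
  · by_cases hw : w = g
    · subst hw
      exact hlm ((mem_moveGood_self.1 hwl).trans (mem_moveGood_self.1 hwm).symm)
    · exact Finset.disjoint_left.1 (hY.2 l m hlm) ((mem_moveGood_of_ne hw).1 hwl)
        ((mem_moveGood_of_ne hw).1 hwm)

theorem util_moveGood (u : Fin n → M → ℝ) {Y : Fin n → Finset M} (hY : IsAllocation Y)
    {g : M} {k : Fin n} (hg : g ∈ Y k) (j l : Fin n) :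
    util u l (moveGood Y g j l) =
      util u l (Y l) + (if l = j then u l g else 0) - (if l = k then u l g else 0) := by
  unfold moveGood util
  have hgl : l ≠ k → g ∉ Y l := fun hlk hgl => Finset.disjoint_left.1 (hY.2 l k hlk) hgl hg
  split_ifs with hlj hlk hlk
  · subst hlk
    rw [Finset.insert_eq_of_mem hg]
    ring
  · rw [Finset.sum_insert (hgl hlk)]
    ring
  · subst hlk
    rw [Finset.sum_erase_eq_sub hg]
    ring
  · rw [Finset.erase_eq_of_notMem (hgl hlk)]
    ring

theorem transferredGoods_moveGood_subset {X Y : Fin n → Finset M} {g : M}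
    (hg : g ∈ transferredGoods X Y) (j : Fin n) :
    transferredGoods X (moveGood Y g j) ⊆ transferredGoods X Y := by
  rintro w ⟨l, hwX, hwY⟩
  by_cases hw : w = g
  · exact hw ▸ hg
  · exact ⟨l, hwX, fun h => hwY ((mem_moveGood_of_ne hw).2 h)⟩

theorem transferredGoods_moveGood_ssubset {X Y : Fin n → Finset M} (hX : IsAllocation X)
    {g : M} {k : Fin n} (hgX : g ∈ X k) (hgY : g ∉ Y k) :
    transferredGoods X (moveGood Y g k) ⊂ transferredGoods X Y := by
  have hg : g ∈ transferredGoods X Y := ⟨k, hgX, hgY⟩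
  refine (Set.ssubset_iff_of_subset (transferredGoods_moveGood_subset hg k)).2 ⟨g, hg, ?_⟩
  rintro ⟨l, hgl, hgl'⟩
  have hlk : l = k := by
    by_contra hlk
    exact Finset.disjoint_left.1 (hX.2 l k hlk) hgl hgX
  exact hgl' (mem_moveGood_self.2 hlk)

end Transfers

namespace IsMinimalParetoImprovement

variable {n : ℕ} {M : Type*} [DecidableEq M] [Finite M] {u : Fin n → M → ℝ}
  {X X' : Fin n → Finset M}

theorem not_transferredGoods_ssubset (hmin : IsMinimalParetoImprovement u X X')
    {Y : Fin n → Finset M} (hY : IsAllocation Y) (hdom : ParetoDominates u Y X) :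
    ¬ transferredGoods X Y ⊂ transferredGoods X X' := fun hlt =>
  (hmin.2.2 Y hY hdom).not_gt (Set.ncard_lt_ncard hlt (Set.toFinite _))

/-- Otherwise giving `h` back to `k` would be a Pareto-improvement with fewer transfers. -/
theorem util_sub_lt (hmin : IsMinimalParetoImprovement u X X') (hX : IsAllocation X)
    (hpos : ∀ k g, 0 < u k g) {i k : Fin n} {h : M} (hk : h ∈ X k) (hki : k ≠ i)
    (hi : h ∈ X' i) :
    util u i (X' i) - util u i (X i) < u i h := by
  obtain ⟨hX', hdom, -⟩ := id hmin
  by_contra! hle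
  have hhk : h ∉ X' k := fun h' => Finset.disjoint_left.1 (hX'.2 k i hki) h' hi
  have hutil := util_moveGood u hX' hi k
  refine hmin.not_transferredGoods_ssubset (hX'.moveGood h k) ⟨fun l => ?_, k, ?_⟩
    (transferredGoods_moveGood_ssubset hX hk hhk)
  · rw [hutil]
    have := hdom.1 l
    split_ifs <;> subst_vars <;> linarith [hpos l h]
  · rw [hutil, if_pos rfl, if_neg hki]
    linarith [hdom.1 k, hpos k h]

/-- Otherwise letting `i` keep `g` and passing `h` on to `j` would be a Pareto-improvement with
fewer transfers. -/
theorem lt_of_reroute (hmin : IsMinimalParetoImprovement u X X') (hX : IsAllocation X)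
    {i j k : Fin n} {g h : M} (hg : g ∈ X i) (hgj : g ∈ X' j) (hji : j ≠ i)
    (hk : h ∈ X k) (hki : k ≠ i) (hh : h ∈ X' i) (hu : u i h = u i g) :
    u j h < u j g := by
  obtain ⟨hX', hdom, -⟩ := id hmin
  by_contra! hle
  have hgh : g ≠ h := fun e => Finset.disjoint_left.1 (hX.2 i k hki.symm) hg (e ▸ hk)
  have hgi : g ∉ X' i := fun h' => Finset.disjoint_left.1 (hX'.2 i j hji.symm) h' hgj
  set Z := moveGood X' g i
  have hZ : IsAllocation Z := hX'.moveGood g i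
  have hhZ : h ∈ Z i := (mem_moveGood_of_ne hgh.symm).2 hh
  have hhk : h ∉ Z k := fun h' =>
    Finset.disjoint_left.1 (hX'.2 k i hki) ((mem_moveGood_of_ne hgh.symm).1 h') hh
  have hgain : ∀ l, util u l (X' l) ≤ util u l (moveGood Z h j l) := fun l => by
    rw [util_moveGood u hZ hhZ, util_moveGood u hX' hgj]
    split_ifs <;> subst_vars <;> linarith
  refine hmin.not_transferredGoods_ssubset (hZ.moveGood h j)
    ⟨fun l => (hdom.1 l).trans (hgain l), hdom.2.imp fun l hl => hl.trans_le (hgain l)⟩ ?_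
  exact (transferredGoods_moveGood_subset ⟨k, hk, hhk⟩ j).trans_ssubset
    (transferredGoods_moveGood_ssubset hX hg hgi)

theorem util_sub_lt_of_LLin_pos (hmin : IsMinimalParetoImprovement u X X')
    (hX : IsAllocation X) (hpos : ∀ k g, 0 < u k g) {c : Fin n → ℝ} {i : Fin n}
    (hin : 0 < LLin u c X X' i) :
    util u i (X' i) - util u i (X i) < c i := by
  obtain ⟨h, hh, hhi, k, hki, hk, -⟩ := Set.nonempty_of_ncard_ne_zero hin.ne'
  exact hhi ▸ hmin.util_sub_lt hX hpos hk hki hh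

theorem not_SSout_pos_and_SSin_pos (hmin : IsMinimalParetoImprovement u X X')
    (hX : IsAllocation X) {a b : Fin n → ℝ} (hab : ∀ i, b i < a i)
    (hbi : ∀ i g, u i g = a i ∨ u i g = b i) (i : Fin n) :
    ¬ (0 < SSout u b X X' i ∧ 0 < SSin u b X X' i) := by
  rintro ⟨hout, hin⟩
  obtain ⟨g, hg, hgi, j, hji, hgj, hgj'⟩ := Set.nonempty_of_ncard_ne_zero hout.ne'
  obtain ⟨h, hh, hhi, k, hki, hk, -⟩ := Set.nonempty_of_ncard_ne_zero hin.ne'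
  have hlt := hmin.lt_of_reroute hX hg hgj hji hk hki hh (hhi.trans hgi.symm)
  rcases hbi j h with hhj | hhj <;> linarith [hab j]

end IsMinimalParetoImprovement

theorem large_iff_and_small_iff {n : ℕ} {M : Type*} {u : Fin n → M → ℝ} {a b : Fin n → ℝ}
    {i j : Fin n} {g : M} (hi : b i ≠ a i) (hj : b j ≠ a j)
    (h : (u i g = a i ∧ u j g = a j) ∨ (u i g = b i ∧ u j g = b j)) :
    (u i g = a i ↔ u j g = a j) ∧ (u i g = b i ↔ u j g = b j) := by
  rcases h with ⟨hgi, hgj⟩ | ⟨hgi, hgj⟩ <;> simp [hgi, hgj, hi, hj, hi.symm, hj.symm]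

section Counting

variable {n : ℕ} {M : Type*} [DecidableEq M] {u : Fin n → M → ℝ}

theorem util_eq_card_filter {a b : ℝ} (hab : b ≠ a) {i : Fin n}
    (hbi : ∀ g, u i g = a ∨ u i g = b) (S : Finset M) :
    util u i S = a * #(S.filter (u i · = a)) + b * #(S.filter (u i · = b)) := by
  rw [Finset.card_filter, Finset.card_filter]
  push_cast
  rw [Finset.mul_sum, Finset.mul_sum, ← Finset.sum_add_distrib]
  refine Finset.sum_congr rfl fun g _ => ?_
  rcases hbi g with h | h <;> simp [h, hab, hab.symm]

/-- `LLin u c X X'` is `LLout u c X' X`, and `SSout`, `SSin` are `LLout`, `LLin` with `b` for `a`,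
all by definition, so this computes all four counts. -/
theorem LLout_eq_card_sdiff_filter {c : Fin n → ℝ} {Y Z : Fin n → Finset M}
    (hZ : IsAllocation Z) {i : Fin n}
    (hc : ∀ j ≠ i, ∀ g ∈ Y i, g ∈ Z j → u i g = c i → u j g = c j) :
    LLout u c Y Z i = #((Y i \ Z i).filter (u i · = c i)) := by
  rw [LLout, ← Set.ncard_coe_finset]
  congr 1
  ext g
  simp only [Set.mem_ofPred_eq, Finset.coe_filter, Finset.mem_sdiff]
  constructor
  · rintro ⟨hgY, hgi, j, hji, hgj, -⟩
    exact ⟨⟨hgY, fun hgZ => Finset.disjoint_left.1 (hZ.2 j i hji) hgj hgZ⟩, hgi⟩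
  · rintro ⟨⟨hgY, hgZ⟩, hgi⟩
    obtain ⟨j, hgj⟩ := hZ.1 g
    have hji : j ≠ i := by rintro rfl; exact hgZ hgj
    exact ⟨hgY, hgi, j, hji, hgj, hc j hji g hgY hgj hgi⟩

theorem util_sub_util_eq_transfers {a b : Fin n → ℝ} (hab : ∀ i, b i < a i)
    (hbi : ∀ i g, u i g = a i ∨ u i g = b i) {X X' : Fin n → Finset M}
    (hX : IsAllocation X) (hX' : IsAllocation X')
    (hLLSS : ∀ (i j : Fin n) (g : M), i ≠ j → g ∈ X i → g ∈ X' j →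
      (u i g = a i ∧ u j g = a j) ∨ (u i g = b i ∧ u j g = b j)) (i : Fin n) :
    util u i (X' i) - util u i (X i) =
      a i * LLin u a X X' i + b i * SSin u b X X' i
        - a i * LLout u a X X' i - b i * SSout u b X X' i := by
  have hiff : ∀ j ≠ i, ∀ g ∈ X i, g ∈ X' j → _ := fun j hji g hg hgj =>
    large_iff_and_small_iff (hab i).ne (hab j).ne (hLLSS i j g hji.symm hg hgj)
  have hiff' : ∀ j ≠ i, ∀ g ∈ X' i, g ∈ X j → _ := fun j hji g hg hgj =>
    large_iff_and_small_iff (hab j).ne (hab i).ne (hLLSS j i g hji hgj hg)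
  have hLout : LLout u a X X' i = _ :=
    LLout_eq_card_sdiff_filter hX' fun j hji g hg hgj => (hiff j hji g hg hgj).1.1
  have hSout : SSout u b X X' i = _ :=
    LLout_eq_card_sdiff_filter hX' fun j hji g hg hgj => (hiff j hji g hg hgj).2.1
  have hLin : LLin u a X X' i = _ :=
    LLout_eq_card_sdiff_filter hX fun j hji g hg hgj => (hiff' j hji g hg hgj).1.2
  have hSin : SSin u b X X' i = _ :=
    LLout_eq_card_sdiff_filter hX fun j hji g hg hgj => (hiff' j hji g hg hgj).2.2
  rw [util, util, ← Finset.sum_sdiff_sub_sum_sdiff, ← util, ← util,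
    util_eq_card_filter (hab i).ne (hbi i), util_eq_card_filter (hab i).ne (hbi i),
    hLout, hSout, hLin, hSin]
  ring

end Counting

theorem counts_classification_of_gain {a b Δ : ℝ} {Lout Lin Sout Sin : ℕ} (hb : 0 < b)
    (hab : b < a) (hΔ : Δ = a * Lin + b * Sin - a * Lout - b * Sout) (hΔ0 : 0 ≤ Δ)
    (hSin : 0 < Sin → Δ < b) (hLin : 0 < Lin → Δ < a) (hS : ¬ (0 < Sout ∧ 0 < Sin)) :
    (0 < Sout → Lout < Lin) ∧ (0 < Sin → Lin < Lout) ∧ (Sout = 0 → Sin = 0 → Lout = Lin) := by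
  have ha : 0 ≤ a := hb.le.trans hab.le
  refine ⟨fun hout => ?_, fun hin => ?_, fun hout hin => ?_⟩
  · obtain rfl : Sin = 0 := by omega
    by_contra! hle
    have hSout : (1 : ℝ) ≤ Sout := by exact_mod_cast hout
    have hL : (Lin : ℝ) ≤ Lout := by exact_mod_cast hle
    rw [Nat.cast_zero] at hΔ
    linarith [mul_le_mul_of_nonneg_left hSout hb.le, mul_le_mul_of_nonneg_left hL ha]
  · obtain rfl : Sout = 0 := by omega
    by_contra! hle
    have hSin' : (1 : ℝ) ≤ Sin := by exact_mod_cast hin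
    have hL : (Lout : ℝ) ≤ Lin := by exact_mod_cast hle
    rw [Nat.cast_zero] at hΔ
    linarith [hSin hin, mul_le_mul_of_nonneg_left hSin' hb.le, mul_le_mul_of_nonneg_left hL ha]
  · subst hout hin
    rw [Nat.cast_zero] at hΔ
    rcases lt_trichotomy Lout Lin with hlt | heq | hgt
    · have hL : (Lout : ℝ) + 1 ≤ Lin := by exact_mod_cast hlt
      linarith [hLin (by omega), mul_le_mul_of_nonneg_left hL ha]
    · exact heq
    · have hL : (Lin : ℝ) + 1 ≤ Lout := by exact_mod_cast hgt
      linarith [mul_le_mul_of_nonneg_left hL ha]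

/-- Let `X'` be a minimal Pareto-improvement of `X` in which every transferred
good is either large for both its giver and receiver (LL) or small for both (SS).  Then for
every agent `i`: (a) `i` does not both give and receive small goods; (b) if `i` gives small
goods then she is a net large-item receiver; (c) if `i` receives small goods then she is a
net large-item giver; (d) if `i` neither gives nor receives small goods then she gives away
exactly as many large goods as she receives. -/
theorem min_pareto_improvement_agent_classification
    (n : ℕ) (M : Type*) [Fintype M] [DecidableEq M]
    (u : Fin n → M → ℝ) (a b : Fin n → ℝ)
    (hab : ∀ i, b i < a i) (hb : ∀ i, 0 < b i)
    (hbi : ∀ i g, u i g = a i ∨ u i g = b i)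
    (X X' : Fin n → Finset M) (hX : IsAllocation X)
    (hmin : IsMinimalParetoImprovement u X X')
    (hLLSS : ∀ (i j : Fin n) (g : M), i ≠ j → g ∈ X i → g ∈ X' j →
      (u i g = a i ∧ u j g = a j) ∨ (u i g = b i ∧ u j g = b j)) :
    ∀ i : Fin n,
      (¬ (0 < SSout u b X X' i ∧ 0 < SSin u b X X' i)) ∧
      (0 < SSout u b X X' i → LLout u a X X' i < LLin u a X X' i) ∧
      (0 < SSin u b X X' i → LLin u a X X' i < LLout u a X X' i) ∧
      (SSout u b X X' i = 0 → SSin u b X X' i = 0 →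
        LLout u a X X' i = LLin u a X X' i) := by
  intro i
  have hpos : ∀ k g, 0 < u k g := fun k g =>
    (hbi k g).elim (fun h => h ▸ (hb k).trans (hab k)) (fun h => h ▸ hb k)
  have hSS := hmin.not_SSout_pos_and_SSin_pos hX hab hbi i
  exact ⟨hSS, counts_classification_of_gain (hb i) (hab i)
    (util_sub_util_eq_transfers hab hbi hX hmin.1 hLLSS i) (sub_nonneg.2 (hmin.2.1.1 i))
    (hmin.util_sub_lt_of_LLin_pos hX hpos) (hmin.util_sub_lt_of_LLin_pos hX hpos) hSS⟩
end
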